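/- arXiv:0912.1448 — 6 statements merged into one kernel-verified Lean document; each statement's English description precedes it below -/
import Mathlib

section
/- Fix an integer s ≥ 1 and p ∈ [0,1]. Let W be an ℕ-valued random variable with pmf μ_j = P(W = j), let α, β : ℕ → [0,∞) with β_0 = 0, and suppose a := E[α(W)] ∈ (0,∞), b := E[β(W)] ∈ (0,∞), E[α(W)(W+1)^s] < ∞ and E[β(W)W^s] < ∞. Let W_α be an ℕ-valued random variable with P(W_α = j) = α_{j−1}μ_{j−1}/a for j ≥ 1, and let (W_β, Y) be a pair of ℕ-valued random variables on some probability space such that P(W_β = j) = β_j μ_j/b for j ≥ 1 and W_β − Y ≥ 0 almost surely. Assume that E[g(W_α)] ≥ p·E[g(W_β − Y)] + (1−p)·g(0) for every s-convex g : ℕ → ℝ whose relevant expectations are finite. Then for every f : ℕ → ℝ with M_s := sup_{k ≥ 0} |Δ^s f(k)| < ∞ and |f(j)| = O(j^s): |E[α(W) f(W+1)] − E[β(W) f(W)]| ≤ Σ_{t=0}^{s−1} |Δ^t f(0)| · |E[α(W) C(W+1, t)] − E[β(W) C(W, t)]| + M_s · ( a·E[C(W_α, s)] − 2ap·E[C(W_β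 − Y, s)] + (ap + |ap − b|)·E[C(W_β, s)] ). -/
/-!
Write `f j = ∑_{t<s} Δᵗf(0) C(j,t) + R j`, where the remainder `R = taylorRem f s` satisfies
`ΔᵗR(0) = 0` for `t < s` and `ΔˢR = Δˢf`. The polynomial part produces the sum over `t` exactly.
Since `|Δˢf| ≤ M`, both functions `M C(·,s) ± R` have nonnegative `s`-th difference and vanishing
lower differences at `0`; hence they are `s`-convex and nondecreasing. This gives
`|R y - R x| ≤ M (C(y,s) - C(x,s))` for `x ≤ y`, and, through the ordering hypothesis,
`|E R(W_α) - p E R(W_β - Y)| ≤ M (E C(W_α,s) - p E C(W_β - Y,s))`.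
The size-biasing identities `E[α(W) g(W+1)] = a E g(W_α)` and `E[β(W) g(W)] = b E g(W_β)`,
valid for `g 0 = 0`, move the remainder terms to `W_α` and `W_β`, and the bound follows from
`a R(W_α) - b R(W_β) = a (R(W_α) - p R(W_β - Y)) - a p (R(W_β) - R(W_β - Y)) + (a p - b) R(W_β)`.
-/

open MeasureTheory ProbabilityTheory

noncomputable def ndiff (g : ℕ → ℝ) : ℕ → ℝ := fun j => g (j + 1) - g j

open Finset

section FiniteDifferences

variable {M G G' : Type*} [AddCommMonoid M] [AddCommGroup G] [AddCommGroup G'] (h : M)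

lemma fwdDiff_iter_sub (f g : M → G) (n : ℕ) :
    (fwdDiff h)^[n] (f - g) = (fwdDiff h)^[n] f - (fwdDiff h)^[n] g := by
  simpa only [fwdDiff_aux.coe_fwdDiffₗ_pow] using map_sub (fwdDiff_aux.fwdDiffₗ M G h ^ n) f g

lemma fwdDiff_iter_addMonoidHom_comp (φ : G →+ G') (f : M → G) (n : ℕ) :
    (fwdDiff h)^[n] (φ ∘ f) = φ ∘ (fwdDiff h)^[n] f := by
  induction n with
  | zero => rfl
  | succ n ih =>
    rw [Function.iterate_succ_apply', Function.iterate_succ_apply', ih]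
    ext y
    simp [fwdDiff]

end FiniteDifferences

lemma ndiff_eq_fwdDiff : ndiff = fwdDiff 1 := rfl

lemma natCast_choose_eq_comp (m : ℕ) :
    (fun x : ℕ => (x.choose m : ℝ)) = Int.castAddHom ℝ ∘ fun x : ℕ => (x.choose m : ℤ) := by
  ext x; simp

lemma ndiff_iter_natCast_choose_zero (m n : ℕ) :
    ndiff^[n] (fun x : ℕ => (x.choose m : ℝ)) 0 = if n = m then 1 else 0 := by
  rw [ndiff_eq_fwdDiff, natCast_choose_eq_comp, fwdDiff_iter_addMonoidHom_comp,
    Function.comp_apply, fwdDiff_iter_choose_zero]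
  split_ifs <;> simp

lemma ndiff_iter_natCast_choose_self (m : ℕ) :
    ndiff^[m] (fun x : ℕ => (x.choose m : ℝ)) = fun _ => 1 := by
  have h := fwdDiff_iter_choose 0 m
  rw [add_zero] at h
  rw [ndiff_eq_fwdDiff, natCast_choose_eq_comp, fwdDiff_iter_addMonoidHom_comp, h]
  ext x; simp

lemma ndiff_iter_natCast_choose_of_lt {m n : ℕ} (h : m < n) :
    ndiff^[n] (fun x : ℕ => (x.choose m : ℝ)) = 0 := by
  obtain ⟨k, rfl⟩ := Nat.exists_eq_add_of_lt h
  rw [add_assoc, add_comm, Function.iterate_add_apply, ndiff_iter_natCast_choose_self,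
    Function.iterate_succ_apply, ndiff_eq_fwdDiff, fwdDiff_const]
  exact Function.iterate_fixed (fwdDiff_const 1 0) k

noncomputable def taylorRem (f : ℕ → ℝ) (s : ℕ) : ℕ → ℝ :=
  f - ∑ t ∈ range s, ndiff^[t] f 0 • fun j : ℕ => (j.choose t : ℝ)

section TaylorRemainder

variable (f : ℕ → ℝ) {s : ℕ}

lemma eq_sum_add_taylorRem (s j : ℕ) :
    f j = ∑ t ∈ range s, ndiff^[t] f 0 * j.choose t + taylorRem f s j := by
  simp [taylorRem]

lemma ndiff_iter_taylorRem (n : ℕ) :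
    ndiff^[n] (taylorRem f s) =
      ndiff^[n] f - ∑ t ∈ range s, ndiff^[t] f 0 • ndiff^[n] fun j : ℕ => (j.choose t : ℝ) := by
  simp only [taylorRem, ndiff_eq_fwdDiff, fwdDiff_iter_sub, fwdDiff_iter_finsetSum,
    fwdDiff_iter_const_smul]

lemma ndiff_iter_taylorRem_zero {t : ℕ} (ht : t < s) : ndiff^[t] (taylorRem f s) 0 = 0 := by
  simp [ndiff_iter_taylorRem, ndiff_iter_natCast_choose_zero, ht]

lemma taylorRem_zero (hs : 0 < s) : taylorRem f s 0 = 0 :=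
  ndiff_iter_taylorRem_zero f hs

lemma ndiff_iter_taylorRem_self : ndiff^[s] (taylorRem f s) = ndiff^[s] f := by
  rw [ndiff_iter_taylorRem, sub_eq_self]
  exact sum_eq_zero fun t ht => by
    rw [ndiff_iter_natCast_choose_of_lt (mem_range.1 ht), smul_zero]

end TaylorRemainder

lemma nonneg_of_ndiff_iter_nonneg {g : ℕ → ℝ} {s : ℕ} (h0 : ∀ t < s, 0 ≤ ndiff^[t] g 0)
    (hs : ∀ j, 0 ≤ ndiff^[s] g j) (j : ℕ) : 0 ≤ g j := by
  induction s generalizing g j with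
  | zero => exact hs j
  | succ s ih =>
    have hg : Monotone g := monotone_nat_of_le_succ fun i => sub_nonneg.1 <|
      ih (g := ndiff g) (fun t ht => h0 (t + 1) (by omega)) hs i
    exact (h0 0 s.succ_pos).trans (hg j.zero_le)

lemma monotone_of_ndiff_iter_nonneg {g : ℕ → ℝ} {s : ℕ} (h0 : ∀ t < s, 0 ≤ ndiff^[t + 1] g 0)
    (hs : ∀ j, 0 ≤ ndiff^[s + 1] g j) : Monotone g :=
  monotone_nat_of_le_succ fun i => sub_nonneg.1 <| nonneg_of_ndiff_iter_nonneg h0 hs i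

section RemainderBounds

variable {f : ℕ → ℝ} {s : ℕ} {M : ℝ}

lemma ndiff_iter_choose_add_taylorRem {ε : ℝ} (n : ℕ) :
    ndiff^[n] (fun j => M * j.choose s + ε * taylorRem f s j) = fun j =>
      M * ndiff^[n] (fun j : ℕ => (j.choose s : ℝ)) j + ε * ndiff^[n] (taylorRem f s) j := by
  change ndiff^[n] (M • (fun j : ℕ => (j.choose s : ℝ)) + ε • taylorRem f s) = _
  simp only [ndiff_eq_fwdDiff, fwdDiff_iter_add, fwdDiff_iter_const_smul]
  rfl

lemma ndiff_iter_choose_add_taylorRem_nonneg (hM : ∀ k, |ndiff^[s] f k| ≤ M) {ε : ℝ}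
    (hε : |ε| ≤ 1) (k : ℕ) :
    0 ≤ ndiff^[s] (fun j => M * j.choose s + ε * taylorRem f s j) k := by
  rw [ndiff_iter_choose_add_taylorRem, ndiff_iter_natCast_choose_self, ndiff_iter_taylorRem_self]
  have : |ε * ndiff^[s] f k| ≤ M := by
    rw [abs_mul]; exact (mul_le_of_le_one_left (abs_nonneg _) hε).trans (hM k)
  linarith [neg_abs_le (ε * ndiff^[s] f k)]

lemma monotone_choose_add_taylorRem (hs : 0 < s) (hM : ∀ k, |ndiff^[s] f k| ≤ M) {ε : ℝ}
    (hε : |ε| ≤ 1) : Monotone fun j => M * j.choose s + ε * taylorRem f s j := by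
  obtain ⟨s, rfl⟩ : ∃ s', s = s' + 1 := ⟨s - 1, by omega⟩
  refine monotone_of_ndiff_iter_nonneg (fun t ht => ?_)
    (ndiff_iter_choose_add_taylorRem_nonneg hM hε)
  rw [ndiff_iter_choose_add_taylorRem]
  dsimp only
  rw [ndiff_iter_natCast_choose_zero, ndiff_iter_taylorRem_zero f (by omega), if_neg (by omega)]
  simp

lemma abs_taylorRem_sub_le (hs : 0 < s) (hM : ∀ k, |ndiff^[s] f k| ≤ M) {x y : ℕ} (hxy : x ≤ y) :
    |taylorRem f s y - taylorRem f s x| ≤ M * (y.choose s - x.choose s) := by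
  have h₁ := monotone_choose_add_taylorRem hs hM (ε := 1) (by simp) hxy
  have h₂ := monotone_choose_add_taylorRem hs hM (ε := -1) (by simp) hxy
  simp only at h₁ h₂
  rw [abs_le]
  constructor <;> linarith

lemma abs_taylorRem_le (hs : 0 < s) (hM : ∀ k, |ndiff^[s] f k| ≤ M) (j : ℕ) :
    |taylorRem f s j| ≤ M * j.choose s := by
  simpa [taylorRem_zero f hs, Nat.choose_eq_zero_of_lt hs] using
    abs_taylorRem_sub_le hs hM j.zero_le

end RemainderBounds

section NatValued

variable {Ω Ω' : Type*} [MeasurableSpace Ω] [MeasurableSpace Ω'] {P : Measure Ω} {P' : Measure Ω'}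
  {X : Ω → ℕ} {Z : Ω' → ℕ}

lemma integrable_comp_nat_iff_summable [IsFiniteMeasure P] (hX : Measurable X) (g : ℕ → ℝ) :
    Integrable (fun ω => g (X ω)) P ↔ Summable fun j => (P {ω | X ω = j}).toReal * |g j| := by
  rw [← Function.comp_def,
    ← integrable_map_measure (measurable_of_countable g).aestronglyMeasurable hX.aemeasurable,
    ← Measure.sum_smul_dirac (P.map X), integrable_sum_dirac_iff fun j => measure_ne_top _ _]
  simp [Measure.map_apply hX (measurableSet_singleton _), Real.norm_eq_abs, Set.preimage]

lemma integral_comp_nat_eq_tsum (hX : Measurable X) {g : ℕ → ℝ}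
    (hg : Integrable (fun ω => g (X ω)) P) :
    ∫ ω, g (X ω) ∂P = ∑' j, (P {ω | X ω = j}).toReal * g j := by
  rw [← integral_map hX.aemeasurable (measurable_of_countable g).aestronglyMeasurable,
    integral_countable]
  · simp [Measure.real, Measure.map_apply hX (measurableSet_singleton _), Set.preimage]
  · rwa [integrable_map_measure (measurable_of_countable g).aestronglyMeasurable hX.aemeasurable]

lemma integrable_comp_and_integral_eq_of_pmf [IsFiniteMeasure P] [IsFiniteMeasure P']
    (hX : Measurable X) (hZ : Measurable Z) {φ g : ℕ → ℝ} {c : ℝ} (hc : 0 < c) {d : ℕ}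
    (hg : ∀ j < d, g j = 0)
    (hpmf : ∀ j, (P {ω | X ω = j}).toReal * φ j = c * ((P' {ω | Z ω = j + d}).toReal * g (j + d)))
    (hφ : Integrable (fun ω => φ (X ω)) P) :
    Integrable (fun ω => g (Z ω)) P' ∧ ∫ ω, φ (X ω) ∂P = c * ∫ ω, g (Z ω) ∂P' := by
  have habs : ∀ j, (P {ω | X ω = j}).toReal * |φ j| / c =
      (P' {ω | Z ω = j + d}).toReal * |g (j + d)| := fun j => by
    have := congrArg abs (hpmf j)
    simp only [abs_mul, abs_of_pos hc, abs_of_nonneg ENNReal.toReal_nonneg] at this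
    rw [this, mul_div_cancel_left₀ _ hc.ne']
  have hsum : Summable fun j => (P' {ω | Z ω = j}).toReal * |g j| :=
    (summable_nat_add_iff d).1 <|
      (((integrable_comp_nat_iff_summable hX φ).1 hφ).div_const c).congr habs
  have hg' := (integrable_comp_nat_iff_summable hZ g).2 hsum
  refine ⟨hg', ?_⟩
  have hsum' : Summable fun j => (P' {ω | Z ω = j}).toReal * g j :=
    Summable.of_abs <| hsum.congr fun j => by rw [abs_mul, abs_of_nonneg ENNReal.toReal_nonneg]
  rw [integral_comp_nat_eq_tsum hX hφ, integral_comp_nat_eq_tsum hZ hg',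
    ← hsum'.sum_add_tsum_nat_add d, sum_eq_zero fun j hj => by rw [hg j (mem_range.1 hj), mul_zero],
    zero_add, ← tsum_mul_left]
  exact tsum_congr hpmf

lemma integrable_mul_comp_of_abs_le_pow {u : Ω → ℝ} {V : Ω → ℕ} (hu : Measurable u)
    (hV : Measurable V) (hu0 : ∀ ω, 0 ≤ u ω) (huV : ∀ ω, V ω = 0 → u ω = 0) {s : ℕ}
    (hint : Integrable (fun ω => u ω * (V ω : ℝ) ^ s) P) {h : ℕ → ℝ} {c : ℝ}
    (hh : ∀ j, |h j| ≤ c * ((j : ℝ) + 1) ^ s) :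
    Integrable (fun ω => u ω * h (V ω)) P := by
  have hc : 0 ≤ c := by simpa using (abs_nonneg _).trans (hh 0)
  refine (hint.const_mul (c * 2 ^ s)).mono'
    (hu.mul ((measurable_of_countable h).comp hV)).aestronglyMeasurable (ae_of_all _ fun ω => ?_)
  rcases Nat.eq_zero_or_pos (V ω) with h0 | h0
  · simp [huV ω h0]
  have hV1 : (1 : ℝ) ≤ V ω := by exact_mod_cast h0
  calc ‖u ω * h (V ω)‖ = u ω * |h (V ω)| := by rw [Real.norm_eq_abs, abs_mul, abs_of_nonneg (hu0 ω)]
    _ ≤ u ω * (c * (2 * (V ω : ℝ)) ^ s) := by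
      refine mul_le_mul_of_nonneg_left ((hh _).trans ?_) (hu0 ω)
      gcongr
      linarith
    _ = c * 2 ^ s * (u ω * (V ω : ℝ) ^ s) := by ring

lemma integral_mul_comp_eq_sum_add_taylorRem {u : Ω → ℝ} {V : Ω → ℕ} (f : ℕ → ℝ) (s : ℕ)
    (hC : ∀ t < s, Integrable (fun ω => u ω * (V ω).choose t) P)
    (hR : Integrable (fun ω => u ω * taylorRem f s (V ω)) P) :
    ∫ ω, u ω * f (V ω) ∂P = ∑ t ∈ range s, ndiff^[t] f 0 * ∫ ω, u ω * (V ω).choose t ∂P +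
      ∫ ω, u ω * taylorRem f s (V ω) ∂P := by
  have hC' : ∀ t ∈ range s, Integrable (fun ω => ndiff^[t] f 0 * (u ω * (V ω).choose t)) P :=
    fun t ht => (hC t (mem_range.1 ht)).const_mul _
  have hsplit : (fun ω => u ω * f (V ω)) = fun ω =>
      ∑ t ∈ range s, ndiff^[t] f 0 * (u ω * (V ω).choose t) + u ω * taylorRem f s (V ω) := by
    ext ω
    rw [eq_sum_add_taylorRem f s (V ω), mul_add, mul_sum]
    exact congrArg (· + _) (sum_congr rfl fun t _ => by ring)
  rw [hsplit, integral_add (integrable_finsetSum _ hC') hR, integral_finsetSum _ hC']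
  simp only [integral_const_mul]

end NatValued

lemma abs_sum_add_sub_sum_add_le (n : ℕ) (c A B : ℕ → ℝ) (x y : ℝ) :
    |(∑ t ∈ range n, c t * A t + x) - (∑ t ∈ range n, c t * B t + y)| ≤
      ∑ t ∈ range n, |c t| * |A t - B t| + |x - y| := by
  rw [add_sub_add_comm, ← sum_sub_distrib]
  refine (abs_add_le _ _).trans (add_le_add_left ((abs_sum_le_sum_abs _ _).trans_eq ?_) _)
  exact sum_congr rfl fun t _ => by rw [← mul_sub, abs_mul]

lemma abs_mul_sub_mul_le {a b p M E₁ E₂ E₃ C₁ C₂ C₃ : ℝ} (ha : 0 ≤ a) (hp : 0 ≤ p)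
    (h₁ : |E₁ - p * E₂| ≤ M * C₁ - p * (M * C₂)) (h₂ : |E₃ - E₂| ≤ M * (C₃ - C₂))
    (h₃ : |E₃| ≤ M * C₃) :
    |a * E₁ - b * E₃| ≤ M * (a * C₁ - 2 * a * p * C₂ + (a * p + |a * p - b|) * C₃) :=
  calc |a * E₁ - b * E₃| = |a * (E₁ - p * E₂) - a * p * (E₃ - E₂) + (a * p - b) * E₃| := by ring_nf
    _ ≤ a * |E₁ - p * E₂| + a * p * |E₃ - E₂| + |a * p - b| * |E₃| := by
      refine ((abs_add_le _ _).trans (add_le_add_left (abs_sub _ _) _)).trans_eq ?_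
      simp only [abs_mul, abs_of_nonneg ha, abs_of_nonneg hp]
    _ ≤ a * (M * C₁ - p * (M * C₂)) + a * p * (M * (C₃ - C₂)) + |a * p - b| * (M * C₃) := by
      gcongr
    _ = M * (a * C₁ - 2 * a * p * C₂ + (a * p + |a * p - b|) * C₃) := by ring

section RemainderIntegrals

variable {Ω Ω₁ Ω₂ : Type*} [MeasurableSpace Ω] [MeasurableSpace Ω₁] [MeasurableSpace Ω₂]
  {P : Measure Ω} {P₁ : Measure Ω₁} {P₂ : Measure Ω₂} {f : ℕ → ℝ} {s : ℕ} {M : ℝ}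

variable (hs : 0 < s) (hM : ∀ k, |ndiff^[s] f k| ≤ M)
include hs hM

lemma integrable_taylorRem_comp {Z : Ω → ℕ} (hZ : Measurable Z)
    (hC : Integrable (fun ω => ((Z ω).choose s : ℝ)) P) :
    Integrable (fun ω => taylorRem f s (Z ω)) P :=
  (hC.const_mul M).mono' ((measurable_of_countable _).comp hZ).aestronglyMeasurable
    (ae_of_all _ fun _ => abs_taylorRem_le hs hM _)

lemma abs_integral_taylorRem_le {Z : Ω → ℕ} (hZ : Measurable Z)
    (hC : Integrable (fun ω => ((Z ω).choose s : ℝ)) P) :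
    |∫ ω, taylorRem f s (Z ω) ∂P| ≤ M * ∫ ω, ((Z ω).choose s : ℝ) ∂P :=
  calc |∫ ω, taylorRem f s (Z ω) ∂P| ≤ ∫ ω, |taylorRem f s (Z ω)| ∂P :=
        abs_integral_le_integral_abs
    _ ≤ ∫ ω, M * ((Z ω).choose s : ℝ) ∂P :=
        integral_mono (integrable_taylorRem_comp hs hM hZ hC).abs (hC.const_mul M)
          fun _ => abs_taylorRem_le hs hM _
    _ = M * ∫ ω, ((Z ω).choose s : ℝ) ∂P := integral_const_mul _ _

lemma abs_integral_taylorRem_sub_le {Z Z' : Ω → ℕ} (hZ : Measurable Z) (hZ' : Measurable Z')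
    (hZZ' : ∀ ω, Z ω ≤ Z' ω) (hC : Integrable (fun ω => ((Z ω).choose s : ℝ)) P)
    (hC' : Integrable (fun ω => ((Z' ω).choose s : ℝ)) P) :
    |∫ ω, taylorRem f s (Z' ω) ∂P - ∫ ω, taylorRem f s (Z ω) ∂P| ≤
      M * (∫ ω, ((Z' ω).choose s : ℝ) ∂P - ∫ ω, ((Z ω).choose s : ℝ) ∂P) := by
  have hR := integrable_taylorRem_comp hs hM hZ hC
  have hR' := integrable_taylorRem_comp hs hM hZ' hC'
  rw [← integral_sub hR' hR, ← integral_sub hC' hC, ← integral_const_mul]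
  exact (abs_integral_le_integral_abs).trans <| integral_mono (hR'.sub hR).abs
    ((hC'.sub hC).const_mul M) fun ω => abs_taylorRem_sub_le hs hM (hZZ' ω)

lemma abs_integral_taylorRem_sub_mul_le {p : ℝ} {Z₁ : Ω₁ → ℕ} {Z₂ : Ω₂ → ℕ}
    (hZ₁ : Measurable Z₁) (hZ₂ : Measurable Z₂)
    (hord : ∀ g : ℕ → ℝ, (∀ j, 0 ≤ ndiff^[s] g j) →
      Integrable (fun ω => g (Z₁ ω)) P₁ → Integrable (fun ω => g (Z₂ ω)) P₂ →
      p * (∫ ω, g (Z₂ ω) ∂P₂) + (1 - p) * g 0 ≤ ∫ ω, g (Z₁ ω) ∂P₁)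
    (hC₁ : Integrable (fun ω => ((Z₁ ω).choose s : ℝ)) P₁)
    (hC₂ : Integrable (fun ω => ((Z₂ ω).choose s : ℝ)) P₂) :
    |∫ ω, taylorRem f s (Z₁ ω) ∂P₁ - p * ∫ ω, taylorRem f s (Z₂ ω) ∂P₂| ≤
      M * ∫ ω, ((Z₁ ω).choose s : ℝ) ∂P₁ - p * (M * ∫ ω, ((Z₂ ω).choose s : ℝ) ∂P₂) := by
  have hR₁ := integrable_taylorRem_comp hs hM hZ₁ hC₁
  have hR₂ := integrable_taylorRem_comp hs hM hZ₂ hC₂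
  have key : ∀ ε : ℝ, |ε| ≤ 1 →
      p * (M * ∫ ω, ((Z₂ ω).choose s : ℝ) ∂P₂ + ε * ∫ ω, taylorRem f s (Z₂ ω) ∂P₂) ≤
        M * ∫ ω, ((Z₁ ω).choose s : ℝ) ∂P₁ + ε * ∫ ω, taylorRem f s (Z₁ ω) ∂P₁ := by
    intro ε hε
    have h := hord _ (ndiff_iter_choose_add_taylorRem_nonneg hM hε)
      ((hC₁.const_mul M).add (hR₁.const_mul ε)) ((hC₂.const_mul M).add (hR₂.const_mul ε))
    rwa [integral_add (hC₁.const_mul M) (hR₁.const_mul ε),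
      integral_add (hC₂.const_mul M) (hR₂.const_mul ε), integral_const_mul, integral_const_mul,
      integral_const_mul, integral_const_mul, taylorRem_zero f hs, Nat.choose_eq_zero_of_lt hs,
      Nat.cast_zero, mul_zero, mul_zero, add_zero, mul_zero, add_zero] at h
  have h₁ := key 1 (by simp)
  have h₂ := key (-1) (by simp)
  rw [abs_le]
  constructor <;> linarith

lemma abs_mul_integral_taylorRem_sub_le {p a b : ℝ} (hp : 0 ≤ p) (ha : 0 ≤ a)
    {Wα : Ω₁ → ℕ} {Wβ Y : Ω₂ → ℕ} (hWα : Measurable Wα) (hWβ : Measurable Wβ) (hY : Measurable Y)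
    (hord : ∀ g : ℕ → ℝ, (∀ j, 0 ≤ ndiff^[s] g j) →
      Integrable (fun ω => g (Wα ω)) P₁ → Integrable (fun ω => g (Wβ ω - Y ω)) P₂ →
      p * (∫ ω, g (Wβ ω - Y ω) ∂P₂) + (1 - p) * g 0 ≤ ∫ ω, g (Wα ω) ∂P₁)
    (hCα : Integrable (fun ω => ((Wα ω).choose s : ℝ)) P₁)
    (hCβ : Integrable (fun ω => ((Wβ ω).choose s : ℝ)) P₂) :
    |a * ∫ ω, taylorRem f s (Wα ω) ∂P₁ - b * ∫ ω, taylorRem f s (Wβ ω) ∂P₂| ≤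
      M * (a * (∫ ω, ((Wα ω).choose s : ℝ) ∂P₁)
        - 2 * a * p * (∫ ω, ((Wβ ω - Y ω).choose s : ℝ) ∂P₂)
        + (a * p + |a * p - b|) * ∫ ω, ((Wβ ω).choose s : ℝ) ∂P₂) := by
  have hZ : Measurable fun ω => Wβ ω - Y ω := hWβ.sub hY
  have hCZ : Integrable (fun ω => ((Wβ ω - Y ω).choose s : ℝ)) P₂ :=
    hCβ.mono' ((measurable_of_countable fun j : ℕ => (j.choose s : ℝ)).comp hZ).aestronglyMeasurable
      (ae_of_all _ fun ω => by
        simpa using Nat.choose_le_choose s (Nat.sub_le (Wβ ω) (Y ω)))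
  exact abs_mul_sub_mul_le ha hp (abs_integral_taylorRem_sub_mul_le hs hM hWα hZ hord hCα hCZ)
    (abs_integral_taylorRem_sub_le hs hM hZ hWβ (fun ω => Nat.sub_le _ _) hCZ hCβ)
    (abs_integral_taylorRem_le hs hM hWβ hCβ)

end RemainderIntegrals

theorem stmt1_general
    {Ω Ω₁ Ω₂ : Type*} [MeasurableSpace Ω] [MeasurableSpace Ω₁] [MeasurableSpace Ω₂]
    (P : Measure Ω) [IsProbabilityMeasure P]
    (P₁ : Measure Ω₁) [IsProbabilityMeasure P₁]
    (P₂ : Measure Ω₂) [IsProbabilityMeasure P₂]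
    (s : ℕ) (hs : 1 ≤ s) (p : ℝ) (hp0 : 0 ≤ p)
    (W : Ω → ℕ) (hW : Measurable W)
    (α β : ℕ → ℝ) (hα : ∀ j, 0 ≤ α j) (hβ : ∀ j, 0 ≤ β j) (hβ0 : β 0 = 0)
    (μ : ℕ → ℝ) (hμ : ∀ j, μ j = (P {ω | W ω = j}).toReal)
    (a b : ℝ) (ha0 : 0 < a) (hb0 : 0 < b)
    (hintα : Integrable (fun ω => α (W ω) * ((W ω : ℝ) + 1) ^ s) P)
    (hintβ : Integrable (fun ω => β (W ω) * (W ω : ℝ) ^ s) P)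
    (Wα : Ω₁ → ℕ) (hWα : Measurable Wα)
    (hWαpmf : ∀ j : ℕ, 1 ≤ j → (P₁ {ω | Wα ω = j}).toReal = α (j - 1) * μ (j - 1) / a)
    (Wβ Y : Ω₂ → ℕ) (hWβ : Measurable Wβ) (hY : Measurable Y)
    (hWβpmf : ∀ j : ℕ, 1 ≤ j → (P₂ {ω | Wβ ω = j}).toReal = β j * μ j / b)
    (hord : ∀ g : ℕ → ℝ, (∀ j, 0 ≤ ndiff^[s] g j) →
      Integrable (fun ω => g (Wα ω)) P₁ →
      Integrable (fun ω => g (Wβ ω - Y ω)) P₂ →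
      p * (∫ ω, g (Wβ ω - Y ω) ∂P₂) + (1 - p) * g 0 ≤ ∫ ω, g (Wα ω) ∂P₁)
    (f : ℕ → ℝ) (M : ℝ) (hM : ∀ k : ℕ, |ndiff^[s] f k| ≤ M) :
    |(∫ ω, α (W ω) * f (W ω + 1) ∂P) - ∫ ω, β (W ω) * f (W ω) ∂P| ≤
      (∑ t ∈ Finset.range s, |ndiff^[t] f 0| *
        |(∫ ω, α (W ω) * (Nat.choose (W ω + 1) t : ℝ) ∂P) -
          ∫ ω, β (W ω) * (Nat.choose (W ω) t : ℝ) ∂P|) +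
      M * (a * (∫ ω, (Nat.choose (Wα ω) s : ℝ) ∂P₁)
        - 2 * a * p * (∫ ω, (Nat.choose (Wβ ω - Y ω) s : ℝ) ∂P₂)
        + (a * p + |a * p - b|) * ∫ ω, (Nat.choose (Wβ ω) s : ℝ) ∂P₂) := by
  have hM0 : 0 ≤ M := (abs_nonneg _).trans (hM 0)
  have hchoose : ∀ t ≤ s, ∀ j : ℕ, |(j.choose t : ℝ)| ≤ 1 * ((j : ℝ) + 1) ^ s := fun t ht j => by
    rw [abs_of_nonneg (Nat.cast_nonneg _), one_mul]
    exact_mod_cast (Nat.choose_le_pow j t).trans ((Nat.pow_le_pow_left j.le_succ t).trans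
      (Nat.pow_le_pow_right j.succ_pos ht))
  have hrem (j : ℕ) : |taylorRem f s j| ≤ M * ((j : ℝ) + 1) ^ s :=
    (abs_taylorRem_le hs hM j).trans (by simpa using mul_le_mul_of_nonneg_left (hchoose s le_rfl j) hM0)
  have intα {h : ℕ → ℝ} {c : ℝ} (hh : ∀ j, |h j| ≤ c * ((j : ℝ) + 1) ^ s) :
      Integrable (fun ω => α (W ω) * h (W ω + 1)) P :=
    integrable_mul_comp_of_abs_le_pow ((measurable_of_countable α).comp hW) (hW.add_const 1)
      (fun _ => hα _) (fun _ h => absurd h (Nat.succ_ne_zero _)) (by simpa using hintα) hh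
  have intβ {h : ℕ → ℝ} {c : ℝ} (hh : ∀ j, |h j| ≤ c * ((j : ℝ) + 1) ^ s) :
      Integrable (fun ω => β (W ω) * h (W ω)) P :=
    integrable_mul_comp_of_abs_le_pow ((measurable_of_countable β).comp hW) hW
      (fun _ => hβ _) (fun _ h => by simp [h, hβ0]) hintβ hh
  have transα {h : ℕ → ℝ} (h0 : h 0 = 0) (hi : Integrable (fun ω => α (W ω) * h (W ω + 1)) P) :=
    integrable_comp_and_integral_eq_of_pmf (φ := fun j => α j * h (j + 1)) (g := h) (d := 1)
      hW hWα ha0 (by simpa)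
      (fun j => by rw [hWαpmf (j + 1) (by omega), Nat.add_sub_cancel, ← hμ]; field_simp) hi
  have transβ {h : ℕ → ℝ} (h0 : h 0 = 0) (hi : Integrable (fun ω => β (W ω) * h (W ω)) P) :=
    integrable_comp_and_integral_eq_of_pmf (φ := fun j => β j * h j) (g := h) (d := 0) hW hWβ hb0
      (by simp) (fun j => by
        rcases j with _ | j
        · simp [hβ0, h0]
        · rw [hWβpmf (j + 1) (by omega), ← hμ]; field_simp) hi
  have hCs0 : ((0 : ℕ).choose s : ℝ) = 0 := by simp [Nat.choose_eq_zero_of_lt hs]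
  rw [integral_mul_comp_eq_sum_add_taylorRem f s (fun t ht => intα (hchoose t ht.le)) (intα hrem),
    integral_mul_comp_eq_sum_add_taylorRem f s (fun t ht => intβ (hchoose t ht.le)) (intβ hrem),
    (transα (taylorRem_zero f hs) (intα hrem)).2, (transβ (taylorRem_zero f hs) (intβ hrem)).2]
  exact (abs_sum_add_sub_sum_add_le _ _ _ _ _ _).trans (add_le_add le_rfl
    (abs_mul_integral_taylorRem_sub_le hs hM hp0 ha0.le hWα hWβ hY hord
      (transα hCs0 (intα (hchoose s le_rfl))).1 (transβ hCs0 (intβ (hchoose s le_rfl))).1))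

/-- Proposition 2 of Daly, Lefèvre, Utev: an `s`-order Stein bound under the
`s`-convex stochastic ordering `W_α ⪰_{s-cx} v_p (W_β - Y)`. -/
theorem stmt1
    {Ω Ω₁ Ω₂ : Type*} [MeasurableSpace Ω] [MeasurableSpace Ω₁] [MeasurableSpace Ω₂]
    (P : Measure Ω) [IsProbabilityMeasure P]
    (P₁ : Measure Ω₁) [IsProbabilityMeasure P₁]
    (P₂ : Measure Ω₂) [IsProbabilityMeasure P₂]
    (s : ℕ) (hs : 1 ≤ s) (p : ℝ) (hp0 : 0 ≤ p) (hp1 : p ≤ 1)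
    (W : Ω → ℕ) (hW : Measurable W)
    (α β : ℕ → ℝ) (hα : ∀ j, 0 ≤ α j) (hβ : ∀ j, 0 ≤ β j) (hβ0 : β 0 = 0)
    (μ : ℕ → ℝ) (hμ : ∀ j, μ j = (P {ω | W ω = j}).toReal)
    (a b : ℝ) (ha0 : 0 < a) (hb0 : 0 < b)
    (ha : ∫ ω, α (W ω) ∂P = a) (hb : ∫ ω, β (W ω) ∂P = b)
    (hintα : Integrable (fun ω => α (W ω) * ((W ω : ℝ) + 1) ^ s) P)
    (hintβ : Integrable (fun ω => β (W ω) * (W ω : ℝ) ^ s) P)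
    (Wα : Ω₁ → ℕ) (hWα : Measurable Wα)
    (hWαpmf : ∀ j : ℕ, 1 ≤ j → (P₁ {ω | Wα ω = j}).toReal = α (j - 1) * μ (j - 1) / a)
    (Wβ Y : Ω₂ → ℕ) (hWβ : Measurable Wβ) (hY : Measurable Y)
    (hWβpmf : ∀ j : ℕ, 1 ≤ j → (P₂ {ω | Wβ ω = j}).toReal = β j * μ j / b)
    (hYW : ∀ᵐ ω ∂P₂, Y ω ≤ Wβ ω)
    (hord : ∀ g : ℕ → ℝ, (∀ j, 0 ≤ ndiff^[s] g j) →
      Integrable (fun ω => g (Wα ω)) P₁ →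
      Integrable (fun ω => g (Wβ ω - Y ω)) P₂ →
      p * (∫ ω, g (Wβ ω - Y ω) ∂P₂) + (1 - p) * g 0 ≤ ∫ ω, g (Wα ω) ∂P₁)
    (f : ℕ → ℝ) (M : ℝ) (hM : ∀ k : ℕ, |ndiff^[s] f k| ≤ M)
    (K : ℝ) (hK : ∀ j : ℕ, |f j| ≤ K * ((j : ℝ) + 1) ^ s) :
    |(∫ ω, α (W ω) * f (W ω + 1) ∂P) - ∫ ω, β (W ω) * f (W ω) ∂P| ≤
      (∑ t ∈ Finset.range s, |ndiff^[t] f 0| *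
        |(∫ ω, α (W ω) * (Nat.choose (W ω + 1) t : ℝ) ∂P) -
          ∫ ω, β (W ω) * (Nat.choose (W ω) t : ℝ) ∂P|) +
      M * (a * (∫ ω, (Nat.choose (Wα ω) s : ℝ) ∂P₁)
        - 2 * a * p * (∫ ω, (Nat.choose (Wβ ω - Y ω) s : ℝ) ∂P₂)
        + (a * p + |a * p - b|) * ∫ ω, (Nat.choose (Wβ ω) s : ℝ) ∂P₂) :=
  stmt1_general P P₁ P₂ s hs p hp0 W hW α β hα hβ hβ0 μ hμ a b ha0 hb0 hintα hintβ Wα hWα hWαpmf Wβ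
    Y hWβ hY hWβpmf hord f M hM
end

section
/- Fix an integer s ≥ 1. Let W be an ℕ-valued random variable with pmf μ, and let α, β : ℕ → [0,∞) with β_0 = 0, E[α(W)] = E[β(W)] ∈ (0,∞), E[α(W)(W+1)^s] < ∞ and E[β(W)W^s] < ∞. Suppose that either (i) E[α(W) g(W+1)] ≥ E[β(W) g(W)] for every s-convex g : ℕ → ℝ with finite relevant expectations, or (ii) the reverse inequality holds for every such g. Then for every f : ℕ → ℝ with M_s := sup_{k ≥ 0} |Δ^s f(k)| < ∞ and |f(j)| = O(j^s): |E[α(W) f(W+1)] − E[β(W) f(W)]| ≤ M_s · |E[α(W) C(W+1, s)] − E[β(W) C(W, s)]|. -/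
open MeasureTheory ProbabilityTheory

lemma ndiff_iter_linear (a b : ℝ) (n : ℕ) : ∀ (g h : ℕ → ℝ),
    ndiff^[n] (fun j => a * g j + b * h j) = fun j => a * ndiff^[n] g j + b * ndiff^[n] h j := by
  induction n with
  | zero => intro g h; simp
  | succ n ih =>
    intro g h
    rw [Function.iterate_succ_apply, Function.iterate_succ_apply, Function.iterate_succ_apply]
    have e : ndiff (fun j => a * g j + b * h j) = fun j => a * ndiff g j + b * ndiff h j := by
      funext j; simp only [ndiff]; ring
    rw [e, ih]

lemma ndiff_iter_choose : ∀ (s : ℕ),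
    ndiff^[s] (fun j => ((Nat.choose j s : ℕ) : ℝ)) = fun _ => (1 : ℝ) := by
  intro s
  induction s with
  | zero => funext j; simp
  | succ t ih =>
    rw [Function.iterate_succ_apply]
    have e : ndiff (fun j => ((Nat.choose j (t + 1) : ℕ) : ℝ))
        = fun j => ((Nat.choose j t : ℕ) : ℝ) := by
      funext j; simp only [ndiff, Nat.choose_succ_succ]; push_cast; ring
    rw [e, ih]

/-- Corollary 1 of Daly, Lefèvre, Utev: the `s`-order Stein bound when
`E α(W) = E β(W)` and `W_α`, `W_β` are `s`-convex ordered (either way). -/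
theorem stmt2
    {Ω : Type*} [MeasurableSpace Ω] (P : Measure Ω) [IsProbabilityMeasure P]
    (s : ℕ) (hs : 1 ≤ s)
    (W : Ω → ℕ) (hW : Measurable W)
    (α β : ℕ → ℝ) (hα : ∀ j, 0 ≤ α j) (hβ : ∀ j, 0 ≤ β j) (hβ0 : β 0 = 0)
    (μ : ℕ → ℝ) (hμ : ∀ j, μ j = (P {ω | W ω = j}).toReal)
    (hmean : ∫ ω, α (W ω) ∂P = ∫ ω, β (W ω) ∂P)
    (hmeanpos : 0 < ∫ ω, α (W ω) ∂P)
    (hintα : Integrable (fun ω => α (W ω) * ((W ω : ℝ) + 1) ^ s) P)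
    (hintβ : Integrable (fun ω => β (W ω) * (W ω : ℝ) ^ s) P)
    (hord :
      (∀ g : ℕ → ℝ, (∀ j, 0 ≤ ndiff^[s] g j) →
        Integrable (fun ω => α (W ω) * g (W ω + 1)) P →
        Integrable (fun ω => β (W ω) * g (W ω)) P →
        (∫ ω, β (W ω) * g (W ω) ∂P) ≤ ∫ ω, α (W ω) * g (W ω + 1) ∂P) ∨
      (∀ g : ℕ → ℝ, (∀ j, 0 ≤ ndiff^[s] g j) →
        Integrable (fun ω => α (W ω) * g (W ω + 1)) P →
        Integrable (fun ω => β (W ω) * g (W ω)) P →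
        (∫ ω, α (W ω) * g (W ω + 1) ∂P) ≤ ∫ ω, β (W ω) * g (W ω) ∂P))
    (f : ℕ → ℝ) (M : ℝ) (hM : ∀ k : ℕ, |ndiff^[s] f k| ≤ M)
    (K : ℝ) (hK : ∀ j : ℕ, |f j| ≤ K * ((j : ℝ) + 1) ^ s) :
    |(∫ ω, α (W ω) * f (W ω + 1) ∂P) - ∫ ω, β (W ω) * f (W ω) ∂P| ≤
      M * |(∫ ω, α (W ω) * (Nat.choose (W ω + 1) s : ℝ) ∂P) -
        ∫ ω, β (W ω) * (Nat.choose (W ω) s : ℝ) ∂P| := by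
  have hM0 : 0 ≤ M := le_trans (abs_nonneg _) (hM 0)
  have hK0 : 0 ≤ K := by
    have := hK 0
    simp only [Nat.cast_zero, zero_add, one_pow, mul_one] at this
    exact le_trans (abs_nonneg _) this
  -- measurability helper
  have meas : ∀ h : ℕ → ℝ, AEStronglyMeasurable (fun ω => h (W ω)) P := fun h =>
    ((measurable_from_top (f := h)).comp hW).aestronglyMeasurable
  -- α-side integrability helper
  have intα' : ∀ (h : ℕ → ℝ) (C : ℝ), (∀ j : ℕ, |h (j + 1)| ≤ C * ((j : ℝ) + 1) ^ s) →
      Integrable (fun ω => α (W ω) * h (W ω + 1)) P := by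
    intro h C hb
    refine (hintα.const_mul C).mono' (meas (fun j => α j * h (j + 1))) ?_
    filter_upwards with ω
    have hb' := hb (W ω)
    rw [Real.norm_eq_abs, abs_mul, abs_of_nonneg (hα _)]
    calc α (W ω) * |h (W ω + 1)| ≤ α (W ω) * (C * ((W ω : ℝ) + 1) ^ s) :=
          mul_le_mul_of_nonneg_left hb' (hα _)
      _ = C * (α (W ω) * ((W ω : ℝ) + 1) ^ s) := by ring
  -- β-side integrability helper (uses β 0 = 0 for j = 0)
  have intβ' : ∀ (h : ℕ → ℝ) (C : ℝ), (∀ j : ℕ, 1 ≤ j → |h j| ≤ C * (j : ℝ) ^ s) →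
      Integrable (fun ω => β (W ω) * h (W ω)) P := by
    intro h C hb
    refine (hintβ.const_mul C).mono' (meas (fun j => β j * h j)) ?_
    filter_upwards with ω
    rw [Real.norm_eq_abs, abs_mul, abs_of_nonneg (hβ _)]
    rcases Nat.eq_zero_or_pos (W ω) with h0 | h1
    · rw [h0, hβ0]; simp
    · have hb' := hb (W ω) h1
      calc β (W ω) * |h (W ω)| ≤ β (W ω) * (C * (W ω : ℝ) ^ s) :=
            mul_le_mul_of_nonneg_left hb' (hβ _)
        _ = C * (β (W ω) * (W ω : ℝ) ^ s) := by ring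
  -- specific integrabilities
  have Iαf : Integrable (fun ω => α (W ω) * f (W ω + 1)) P := by
    refine intα' f (K * 2 ^ s) (fun j => ?_)
    have h1 := hK (j + 1)
    push_cast at h1
    have h2 : ((j : ℝ) + 1 + 1) ^ s ≤ (2 * ((j : ℝ) + 1)) ^ s := by
      apply pow_le_pow_left₀ (by positivity) (by linarith)
    calc |f (j + 1)| ≤ K * ((j : ℝ) + 1 + 1) ^ s := h1
      _ ≤ K * (2 * ((j : ℝ) + 1)) ^ s := by nlinarith [pow_nonneg (by positivity : (0:ℝ) ≤ (j:ℝ)+1+1) s]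
      _ = K * 2 ^ s * ((j : ℝ) + 1) ^ s := by rw [mul_pow]; ring
  have Iβf : Integrable (fun ω => β (W ω) * f (W ω)) P := by
    refine intβ' f (K * 2 ^ s) (fun j hj => ?_)
    have h1 := hK j
    have hj1 : (1 : ℝ) ≤ (j : ℝ) := by exact_mod_cast hj
    have h2 : ((j : ℝ) + 1) ^ s ≤ (2 * (j : ℝ)) ^ s := by
      apply pow_le_pow_left₀ (by positivity) (by linarith)
    calc |f j| ≤ K * ((j : ℝ) + 1) ^ s := h1
      _ ≤ K * (2 * (j : ℝ)) ^ s := by nlinarith [pow_nonneg (by positivity : (0:ℝ) ≤ (j:ℝ)+1) s]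
      _ = K * 2 ^ s * (j : ℝ) ^ s := by rw [mul_pow]; ring
  have Iαc : Integrable (fun ω => α (W ω) * ((Nat.choose (W ω + 1) s : ℕ) : ℝ)) P := by
    refine intα' (fun j => ((Nat.choose j s : ℕ) : ℝ)) 1 (fun j => ?_)
    rw [abs_of_nonneg (by positivity), one_mul]
    calc ((Nat.choose (j + 1) s : ℕ) : ℝ) ≤ (((j + 1) ^ s : ℕ) : ℝ) := by
          exact_mod_cast Nat.choose_le_pow (j + 1) s
      _ = ((j : ℝ) + 1) ^ s := by push_cast; ring
  have Iβc : Integrable (fun ω => β (W ω) * ((Nat.choose (W ω) s : ℕ) : ℝ)) P := by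
    refine intβ' (fun j => ((Nat.choose j s : ℕ) : ℝ)) 1 (fun j _ => ?_)
    rw [abs_of_nonneg (by positivity), one_mul]
    calc ((Nat.choose j s : ℕ) : ℝ) ≤ ((j ^ s : ℕ) : ℝ) := by
          exact_mod_cast Nat.choose_le_pow j s
      _ = (j : ℝ) ^ s := by push_cast; ring
  -- abbreviations
  set A := ∫ ω, α (W ω) * f (W ω + 1) ∂P with hA
  set B := ∫ ω, β (W ω) * f (W ω) ∂P with hB
  set Ac := ∫ ω, α (W ω) * ((Nat.choose (W ω + 1) s : ℕ) : ℝ) ∂P with hAc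
  set Bc := ∫ ω, β (W ω) * ((Nat.choose (W ω) s : ℕ) : ℝ) ∂P with hBc
  -- s-convexity of the two test functions g± = M·C(·,s) ± f
  have hconv : ∀ σ : ℝ, σ = 1 ∨ σ = -1 →
      ∀ j, 0 ≤ ndiff^[s] (fun j => M * ((Nat.choose j s : ℕ) : ℝ) + σ * f j) j := by
    intro σ hσ j
    rw [ndiff_iter_linear M σ s (fun j => ((Nat.choose j s : ℕ) : ℝ)) f, ndiff_iter_choose s]
    have := hM j
    show 0 ≤ M * 1 + σ * ndiff^[s] f j
    cases abs_le.mp this with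
    | intro h1 h2 => rcases hσ with h | h <;> rw [h] <;> linarith
  -- integral computations for g±
  have splitα : ∀ σ : ℝ,
      ∫ ω, α (W ω) * ((fun j => M * ((Nat.choose j s : ℕ) : ℝ) + σ * f j) (W ω + 1)) ∂P
        = M * Ac + σ * A := by
    intro σ
    have e : (fun ω => α (W ω) * ((fun j => M * ((Nat.choose j s : ℕ) : ℝ) + σ * f j) (W ω + 1)))
        = fun ω => M * (α (W ω) * ((Nat.choose (W ω + 1) s : ℕ) : ℝ))
            + σ * (α (W ω) * f (W ω + 1)) := by
      funext ω; simp only; ring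
    rw [e, integral_add (Iαc.const_mul M) (Iαf.const_mul σ), integral_const_mul,
      integral_const_mul]
  have splitβ : ∀ σ : ℝ,
      ∫ ω, β (W ω) * ((fun j => M * ((Nat.choose j s : ℕ) : ℝ) + σ * f j) (W ω)) ∂P
        = M * Bc + σ * B := by
    intro σ
    have e : (fun ω => β (W ω) * ((fun j => M * ((Nat.choose j s : ℕ) : ℝ) + σ * f j) (W ω)))
        = fun ω => M * (β (W ω) * ((Nat.choose (W ω) s : ℕ) : ℝ))
            + σ * (β (W ω) * f (W ω)) := by
      funext ω; simp only; ring
    rw [e, integral_add (Iβc.const_mul M) (Iβf.const_mul σ), integral_const_mul,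
      integral_const_mul]
  have intgα : ∀ σ : ℝ,
      Integrable (fun ω => α (W ω) * ((fun j => M * ((Nat.choose j s : ℕ) : ℝ) + σ * f j) (W ω + 1))) P := by
    intro σ
    have e : (fun ω => α (W ω) * ((fun j => M * ((Nat.choose j s : ℕ) : ℝ) + σ * f j) (W ω + 1)))
        = fun ω => M * (α (W ω) * ((Nat.choose (W ω + 1) s : ℕ) : ℝ))
            + σ * (α (W ω) * f (W ω + 1)) := by
      funext ω; simp only; ring
    rw [e]; exact (Iαc.const_mul M).add (Iαf.const_mul σ)
  have intgβ : ∀ σ : ℝ,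
      Integrable (fun ω => β (W ω) * ((fun j => M * ((Nat.choose j s : ℕ) : ℝ) + σ * f j) (W ω))) P := by
    intro σ
    have e : (fun ω => β (W ω) * ((fun j => M * ((Nat.choose j s : ℕ) : ℝ) + σ * f j) (W ω)))
        = fun ω => M * (β (W ω) * ((Nat.choose (W ω) s : ℕ) : ℝ))
            + σ * (β (W ω) * f (W ω)) := by
      funext ω; simp only; ring
    rw [e]; exact (Iβc.const_mul M).add (Iβf.const_mul σ)
  -- convexity of C(·,s) itself
  have hconvc : ∀ j, 0 ≤ ndiff^[s] (fun j => ((Nat.choose j s : ℕ) : ℝ)) j := by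
    intro j; rw [ndiff_iter_choose s]; norm_num
  rcases hord with h | h
  · -- case (i): Bc ≤ Ac and |A - B| ≤ M * (Ac - Bc)
    have hD : Bc ≤ Ac := h _ hconvc Iαc Iβc
    have h1 := h _ (hconv 1 (Or.inl rfl)) (intgα 1) (intgβ 1)
    have h2 := h _ (hconv (-1) (Or.inr rfl)) (intgα (-1)) (intgβ (-1))
    rw [splitα 1, splitβ 1] at h1
    rw [splitα (-1), splitβ (-1)] at h2
    rw [abs_of_nonneg (by linarith : (0 : ℝ) ≤ Ac - Bc), abs_le]
    constructor <;> nlinarith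
  · -- case (ii): Ac ≤ Bc and |A - B| ≤ M * (Bc - Ac)
    have hD : Ac ≤ Bc := h _ hconvc Iαc Iβc
    have h1 := h _ (hconv 1 (Or.inl rfl)) (intgα 1) (intgβ 1)
    have h2 := h _ (hconv (-1) (Or.inr rfl)) (intgα (-1)) (intgβ (-1))
    rw [splitα 1, splitβ 1] at h1
    rw [splitα (-1), splitβ (-1)] at h2
    rw [abs_of_nonpos (by linarith : Ac - Bc ≤ 0), abs_le]
    constructor <;> nlinarith
end

section
/- Fix an integer s ≥ 1 and p ∈ [0,1]. Let X be an ℕ-valued random variable and let (Z, Y) be a pair of ℕ-valued random variables on some probability space with Z − Y ≥ 0 almost surely. Assume E[C(X, s)] < ∞ and E[C(Z, s)] < ∞, and that E[g(X)] ≥ p·E[g(Z − Y)] + (1−p)·g(0) for every s-convex g : ℕ → ℝ whose relevant expectations are finite. Then for all a, b ∈ [0,∞): Σ_{k=0}^∞ | a·E[C(X − k − 1, s−1)] − b·E[C(Z − k − 1, s−1)] | ≤ a·E[C(X, s)] − 2ap·E[C(Z − Y, s)] + (ap + |ap − b|)·E[C(Z, s)], where X − k − 1 and Z − k − 1 are computed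 in ℤ. -/
open MeasureTheory ProbabilityTheory

/-- Generalized binomial coefficient `C(m, t)` for `m : ℤ`, `t : ℕ`:
`m(m-1)⋯(m-t+1)/t!` when `0 ≤ t ≤ m`, and `0` otherwise. -/
noncomputable def genBinom (m : ℤ) (t : ℕ) : ℝ :=
  if (t : ℤ) ≤ m then (m.toNat.choose t : ℝ) else 0

/-!
As a function of `x`, the summand `C(x - k - 1, s - 1)` is `s`-convex, because
`Δ C(x - c, t + 1) = C(x - c, t)`, and it vanishes at `x = 0`; its sum over `k` is `C(x, s)` by the
hockey-stick identity. The ordering hypothesis therefore gives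
`p E[C(Z - Y - k - 1, s - 1)] ≤ E[C(X - k - 1, s - 1)]` for every `k`. Writing `A_k, B_k, C_k` for
the expectations with `X`, `Z`, `Z - Y`, the bound follows by summing over `k` the termwise estimate
obtained from `a A_k - b B_k = a (A_k - p C_k) + a p (C_k - B_k) + (a p - b) B_k`.
-/

lemma genBinom_nonneg (m : ℤ) (t : ℕ) : 0 ≤ genBinom m t := by
  unfold genBinom; split <;> positivity

lemma genBinom_of_nonneg {m : ℤ} (hm : 0 ≤ m) (t : ℕ) :
    genBinom m t = (m.toNat.choose t : ℝ) := by
  unfold genBinom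
  split_ifs with h
  · rfl
  · rw [Nat.choose_eq_zero_of_lt (by omega), Nat.cast_zero]

lemma genBinom_of_neg {m : ℤ} (hm : m < 0) (t : ℕ) : genBinom m t = 0 := by
  unfold genBinom; rw [if_neg (by omega)]

lemma genBinom_add_one_add_one (m : ℤ) (t : ℕ) :
    genBinom (m + 1) (t + 1) = genBinom m (t + 1) + genBinom m t := by
  rcases lt_or_ge m 0 with hm | hm
  · rw [genBinom_of_neg hm, genBinom_of_neg hm, add_zero]
    unfold genBinom
    rw [if_neg (by omega)]
  · rw [genBinom_of_nonneg (by omega), genBinom_of_nonneg hm, genBinom_of_nonneg hm,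
      show (m + 1).toNat = m.toNat + 1 by omega, Nat.choose_succ_succ', Nat.cast_add, add_comm]

lemma genBinom_monotone (t : ℕ) : Monotone (genBinom · t) := by
  intro m m' h
  by_cases hm : (t : ℤ) ≤ m
  · simp only [genBinom, hm, le_trans hm h, if_true]
    exact_mod_cast Nat.choose_le_choose t (by omega)
  · simp only [genBinom, hm, if_false]
    exact genBinom_nonneg m' t

lemma sum_range_choose_eq_choose_succ (t n : ℕ) :
    ∑ j ∈ Finset.range n, j.choose t = n.choose (t + 1) := by
  induction n with
  | zero => simp
  | succ n ih => rw [Finset.sum_range_succ, ih, Nat.choose_succ_succ', add_comm]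

lemma hasSum_genBinom_sub_sub_one (n t : ℕ) :
    HasSum (fun k : ℕ => genBinom ((n : ℤ) - k - 1) t) (n.choose (t + 1)) := by
  have hvanish : ∀ k ∉ Finset.range n, genBinom ((n : ℤ) - k - 1) t = 0 := fun k hk =>
    genBinom_of_neg (by simp only [Finset.mem_range, not_lt] at hk; omega) t
  suffices h : ∑ k ∈ Finset.range n, genBinom ((n : ℤ) - k - 1) t = n.choose (t + 1) by
    rw [← h]; exact hasSum_sum_of_ne_finset_zero hvanish
  rw [← sum_range_choose_eq_choose_succ, Nat.cast_sum,
    ← Finset.sum_range_reflect (fun j => (j.choose t : ℝ))]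
  refine Finset.sum_congr rfl fun k hk => ?_
  rw [Finset.mem_range] at hk
  rw [genBinom_of_nonneg (by omega), show ((n : ℤ) - k - 1).toNat = n - 1 - k by omega]

lemma ndiff_genBinom_sub (c : ℤ) (t : ℕ) :
    ndiff (fun n : ℕ => genBinom (n - c) (t + 1)) = fun n : ℕ => genBinom (n - c) t := by
  funext n
  rw [ndiff, Nat.cast_add_one, add_sub_right_comm, genBinom_add_one_add_one, add_sub_cancel_left]

lemma ndiff_iterate_genBinom_sub (c : ℤ) (t i : ℕ) :
    ndiff^[i] (fun n : ℕ => genBinom (n - c) (t + i)) = fun n : ℕ => genBinom (n - c) t := by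
  induction i with
  | zero => rfl
  | succ i ih => rw [Function.iterate_succ_apply, ← add_assoc, ndiff_genBinom_sub, ih]

lemma ndiff_iterate_genBinom_sub_nonneg (c : ℤ) (t j : ℕ) :
    0 ≤ ndiff^[t + 1] (fun n : ℕ => genBinom (n - c) t) j := by
  have h := ndiff_iterate_genBinom_sub c 0 t
  rw [zero_add] at h
  rw [Function.iterate_succ_apply', h, ndiff, sub_nonneg, Nat.cast_add_one]
  exact genBinom_monotone 0 (by omega)

lemma abs_mul_sub_mul_le_s3 {a b p x y z : ℝ} (ha : 0 ≤ a) (hp : 0 ≤ p)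
    (hzx : p * z ≤ x) (hzy : z ≤ y) (hy : 0 ≤ y) :
    |a * x - b * y| ≤ a * (x - p * z) + a * p * (y - z) + |a * p - b| * y :=
  calc |a * x - b * y| = |a * (x - p * z) + a * p * (z - y) + (a * p - b) * y| := by ring_nf
    _ ≤ |a * (x - p * z)| + |a * p * (z - y)| + |(a * p - b) * y| := abs_add_three _ _ _
    _ = a * (x - p * z) + a * p * (y - z) + |a * p - b| * y := by
      rw [abs_of_nonneg (mul_nonneg ha (sub_nonneg.2 hzx)), abs_mul (a * p),
        abs_of_nonneg (mul_nonneg ha hp), abs_sub_comm, abs_of_nonneg (sub_nonneg.2 hzy),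
        abs_mul, abs_of_nonneg hy]

lemma tsum_abs_mul_sub_mul_le {ι : Type*} {A B C : ι → ℝ} {α β γ a b p : ℝ}
    (hA : HasSum A α) (hB : HasSum B β) (hC : HasSum C γ) (ha : 0 ≤ a) (hp : 0 ≤ p)
    (hCA : ∀ k, p * C k ≤ A k) (hCB : ∀ k, C k ≤ B k) (hB0 : ∀ k, 0 ≤ B k) :
    ∑' k, |a * A k - b * B k| ≤ a * α - 2 * a * p * γ + (a * p + |a * p - b|) * β := by
  have hbound : HasSum (fun k => a * (A k - p * C k) + a * p * (B k - C k) + |a * p - b| * B k)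
      (a * (α - p * γ) + a * p * (β - γ) + |a * p - b| * β) :=
    (((hA.sub (hC.mul_left p)).mul_left a).add ((hB.sub hC).mul_left (a * p))).add
      (hB.mul_left _)
  have hle k := abs_mul_sub_mul_le_s3 (b := b) ha hp (hCA k) (hCB k) (hB0 k)
  calc ∑' k, |a * A k - b * B k|
      ≤ a * (α - p * γ) + a * p * (β - γ) + |a * p - b| * β :=
        hasSum_le hle (hbound.summable.of_nonneg_of_le (fun _ => abs_nonneg _) hle).hasSum hbound
    _ = _ := by ring

section Expectation

variable {Ω : Type*} [MeasurableSpace Ω] {μ : Measure Ω} {W : Ω → ℕ} {t : ℕ}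

lemma integrable_genBinom_sub_sub_one (hW : Measurable W)
    (hint : Integrable (fun ω => ((W ω).choose (t + 1) : ℝ)) μ) (k : ℕ) :
    Integrable (fun ω => genBinom ((W ω : ℤ) - k - 1) t) μ :=
  hint.mono' (by fun_prop) <| ae_of_all _ fun ω => by
    rw [Real.norm_of_nonneg (genBinom_nonneg _ _)]
    exact le_hasSum (hasSum_genBinom_sub_sub_one _ _) k fun _ _ => genBinom_nonneg _ _

lemma hasSum_integral_genBinom_sub_sub_one (hW : Measurable W)
    (hint : Integrable (fun ω => ((W ω).choose (t + 1) : ℝ)) μ) :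
    HasSum (fun k : ℕ => ∫ ω, genBinom ((W ω : ℤ) - k - 1) t ∂μ)
      (∫ ω, ((W ω).choose (t + 1) : ℝ) ∂μ) :=
  hasSum_integral_of_dominated_convergence (fun k ω => genBinom ((W ω : ℤ) - k - 1) t)
    (fun _ => by fun_prop)
    (fun _ => ae_of_all _ fun _ => (Real.norm_of_nonneg (genBinom_nonneg _ _)).le)
    (ae_of_all _ fun _ => (hasSum_genBinom_sub_sub_one _ _).summable)
    (hint.congr (ae_of_all _ fun _ => (hasSum_genBinom_sub_sub_one _ _).tsum_eq.symm))
    (ae_of_all _ fun _ => hasSum_genBinom_sub_sub_one _ _)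

end Expectation

theorem stmt3_general
    {Ω₁ Ω₂ : Type*} [MeasurableSpace Ω₁] [MeasurableSpace Ω₂]
    (P₁ : Measure Ω₁)
    (P₂ : Measure Ω₂)
    (s : ℕ) (hs : 1 ≤ s) (p : ℝ) (hp0 : 0 ≤ p)
    (X : Ω₁ → ℕ) (hX : Measurable X)
    (Z Y : Ω₂ → ℕ) (hZ : Measurable Z) (hY : Measurable Y)
    (hintX : Integrable (fun ω => (Nat.choose (X ω) s : ℝ)) P₁)
    (hintZ : Integrable (fun ω => (Nat.choose (Z ω) s : ℝ)) P₂)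
    (hord : ∀ g : ℕ → ℝ, (∀ j, 0 ≤ ndiff^[s] g j) →
      Integrable (fun ω => g (X ω)) P₁ →
      Integrable (fun ω => g (Z ω - Y ω)) P₂ →
      p * (∫ ω, g (Z ω - Y ω) ∂P₂) + (1 - p) * g 0 ≤ ∫ ω, g (X ω) ∂P₁)
    (a b : ℝ) (ha : 0 ≤ a) :
    (∑' k : ℕ, |a * (∫ ω, genBinom ((X ω : ℤ) - k - 1) (s - 1) ∂P₁)
        - b * ∫ ω, genBinom ((Z ω : ℤ) - k - 1) (s - 1) ∂P₂|) ≤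
      a * (∫ ω, (Nat.choose (X ω) s : ℝ) ∂P₁)
        - 2 * a * p * (∫ ω, (Nat.choose (Z ω - Y ω) s : ℝ) ∂P₂)
        + (a * p + |a * p - b|) * ∫ ω, (Nat.choose (Z ω) s : ℝ) ∂P₂ := by
  obtain ⟨t, rfl⟩ : ∃ t, s = t + 1 := ⟨s - 1, by omega⟩
  rw [Nat.add_sub_cancel]
  have hZY : Measurable fun ω => Z ω - Y ω := hZ.sub hY
  have hintZY : Integrable (fun ω => ((Z ω - Y ω).choose (t + 1) : ℝ)) P₂ :=
    hintZ.mono' (by fun_prop) <| ae_of_all _ fun ω => by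
      rw [Real.norm_natCast]
      exact_mod_cast Nat.choose_le_choose _ (Nat.sub_le _ _)
  refine tsum_abs_mul_sub_mul_le (hasSum_integral_genBinom_sub_sub_one hX hintX)
    (hasSum_integral_genBinom_sub_sub_one hZ hintZ)
    (hasSum_integral_genBinom_sub_sub_one hZY hintZY) ha hp0 (fun k => ?_) (fun k => ?_)
    (fun _ => integral_nonneg fun _ => genBinom_nonneg _ _)
  · have hconv (j : ℕ) : 0 ≤ ndiff^[t + 1] (fun n : ℕ => genBinom ((n : ℤ) - k - 1) t) j := by
      simpa only [sub_sub] using ndiff_iterate_genBinom_sub_nonneg ((k : ℤ) + 1) t j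
    have h := hord _ hconv (integrable_genBinom_sub_sub_one hX hintX k)
      (integrable_genBinom_sub_sub_one hZY hintZY k)
    rwa [genBinom_of_neg (by omega), mul_zero, add_zero] at h
  · exact integral_mono (integrable_genBinom_sub_sub_one hZY hintZY k)
      (integrable_genBinom_sub_sub_one hZ hintZ k) fun ω => genBinom_monotone t (by omega)

/-- Lemma 1 of Daly, Lefèvre, Utev: an abstract metrics–ordering relationship
under the `s`-convex stochastic ordering `X ⪰_{s-cx} v_p (Z - Y)`. -/
theorem stmt3
    {Ω₁ Ω₂ : Type*} [MeasurableSpace Ω₁] [MeasurableSpace Ω₂]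
    (P₁ : Measure Ω₁) [IsProbabilityMeasure P₁]
    (P₂ : Measure Ω₂) [IsProbabilityMeasure P₂]
    (s : ℕ) (hs : 1 ≤ s) (p : ℝ) (hp0 : 0 ≤ p) (hp1 : p ≤ 1)
    (X : Ω₁ → ℕ) (hX : Measurable X)
    (Z Y : Ω₂ → ℕ) (hZ : Measurable Z) (hY : Measurable Y)
    (hYZ : ∀ᵐ ω ∂P₂, Y ω ≤ Z ω)
    (hintX : Integrable (fun ω => (Nat.choose (X ω) s : ℝ)) P₁)
    (hintZ : Integrable (fun ω => (Nat.choose (Z ω) s : ℝ)) P₂)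
    (hord : ∀ g : ℕ → ℝ, (∀ j, 0 ≤ ndiff^[s] g j) →
      Integrable (fun ω => g (X ω)) P₁ →
      Integrable (fun ω => g (Z ω - Y ω)) P₂ →
      p * (∫ ω, g (Z ω - Y ω) ∂P₂) + (1 - p) * g 0 ≤ ∫ ω, g (X ω) ∂P₁)
    (a b : ℝ) (ha : 0 ≤ a) (hb : 0 ≤ b) :
    (∑' k : ℕ, |a * (∫ ω, genBinom ((X ω : ℤ) - k - 1) (s - 1) ∂P₁)
        - b * ∫ ω, genBinom ((Z ω : ℤ) - k - 1) (s - 1) ∂P₂|) ≤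
      a * (∫ ω, (Nat.choose (X ω) s : ℝ) ∂P₁)
        - 2 * a * p * (∫ ω, (Nat.choose (Z ω - Y ω) s : ℝ) ∂P₂)
        + (a * p + |a * p - b|) * ∫ ω, (Nat.choose (Z ω) s : ℝ) ∂P₂ :=
  stmt3_general P₁ P₂ s hs p hp0 X hX Z Y hZ hY hintX hintZ hord a b ha
end

section
/- Let n ≥ 2 be an integer and 0 < p < 1/2. Let W have the binomial distribution Bin(n, p), and set α = n(n−1)p(1−p) and γ = (n−1)(1−2p). Let π be the ℕ-valued random variable with P(π = j) = c·α^j/(j!·∏_{k=1}^j (γ + k − 1)) for j ≥ 0, where c > 0 is the normalizing constant. Then d_TV(L(W), L(π)) ≤ 2p². -/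
/-!
Stein's method. For a test function `χ` with values in `[0, 1]`, the solution `g` (with
`g 0 = 0`) of `α g(j+1) - β_j g(j) = χ(j) - E χ(π)` satisfies `|g(j+2) - g(j+1)| ≤ 1/α`: since
the death rates `β_j` are nondecreasing, `P(π ≤ j) / P(π = j)` increases and
`P(π > j) / P(π = j)` decreases in `j`, which pins the worst case of the increment down to
`χ = 1_{j+1}`. On the binomial side the size-bias identity `E[W f(W)] = n p E[f(W' + 1)]`,
`W' ∼ Bin(n - 1, p)`, applied twice, shows that for the chosen `α, γ` the Stein operator averages
to `E[α g(W+1) - β_W g(W)] = α p² E[Δ²g(W'' + 1)]` with `W'' ∼ Bin(n - 2, p)`. Hence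
`|E χ(W) - E χ(π)| ≤ α p² · 2/α = 2p²`.
-/

open MeasureTheory ProbabilityTheory

/-- Total variation distance between two laws on `ℤ`. -/
noncomputable def dTV (μ ν : Measure ℤ) : ℝ :=
  ⨆ B : Set ℤ, |(μ B).toReal - (ν B).toReal|

open Finset

section Binomial

variable {R : Type*} [CommRing R] (p : R)

-- `E[f(W)]` for `W ∼ Bin(n, p)`; summing over `i + j = n` avoids the truncated `n - i`.
noncomputable def binomialExpectation (n : ℕ) (f : ℕ → R) : R :=
  ∑ ij ∈ antidiagonal n, n.choose ij.1 * p ^ ij.1 * (1 - p) ^ ij.2 * f ij.1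

@[simp]
lemma binomialExpectation_zero (f : ℕ → R) : binomialExpectation p 0 f = f 0 := by
  simp [binomialExpectation]

lemma binomialExpectation_sub (n : ℕ) (f g : ℕ → R) :
    binomialExpectation p n (fun k => f k - g k) =
      binomialExpectation p n f - binomialExpectation p n g := by
  simp only [binomialExpectation, ← sum_sub_distrib, mul_sub]

lemma binomialExpectation_succ (n : ℕ) (f : ℕ → R) :
    binomialExpectation p (n + 1) f =
      binomialExpectation p n (fun k => (1 - p) * f k + p * f (k + 1)) := by
  unfold binomialExpectation
  simp only [mul_assoc]
  rw [sum_antidiagonal_choose_succ_mul (fun i j => p ^ i * ((1 - p) ^ j * f i)) n,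
    ← sum_add_distrib]
  refine sum_congr rfl fun ij hij => ?_
  rw [Nat.choose_symm_of_eq_add (mem_antidiagonal.1 hij).symm]
  ring

lemma binomialExpectation_succ_natCast_mul (n : ℕ) (f : ℕ → R) :
    binomialExpectation p (n + 1) (fun k => k * f k) =
      (n + 1) * p * binomialExpectation p n (fun k => f (k + 1)) := by
  unfold binomialExpectation
  rw [Nat.sum_antidiagonal_succ, mul_sum]
  simp only [Nat.cast_zero, zero_mul, mul_zero, zero_add]
  refine sum_congr rfl fun ij _ => ?_
  have h := congrArg (Nat.cast : ℕ → R) (Nat.add_one_mul_choose_eq n ij.1)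
  push_cast at h ⊢
  linear_combination (-(p ^ (ij.1 + 1) * (1 - p) ^ ij.2 * f (ij.1 + 1))) * h

lemma binomialExpectation_const (n : ℕ) (c : R) :
    binomialExpectation p n (fun _ => c) = c := by
  induction n with
  | zero => simp
  | succ n ih => rw [binomialExpectation_succ, show (1 - p) * c + p * c = c by ring, ih]

/-- The Stein operator of `PBD(α, γj + j(j-1))` with `α = (m+2)(m+1)p(1-p)`, `γ = (m+1)(1-2p)`,
averaged against `Bin(m + 2, p)`. -/
lemma binomialExpectation_pbd_stein (m : ℕ) (g : ℕ → R) :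
    binomialExpectation p (m + 2) (fun k => (m + 2) * (m + 1) * p * (1 - p) * g (k + 1) -
      ((m + 1) * (1 - 2 * p) * k + k * (k - 1)) * g k) =
    (m + 2) * (m + 1) * p * (1 - p) * p ^ 2 *
      binomialExpectation p m (fun k => g (k + 1) - 2 * g (k + 2) + g (k + 3)) := by
  have hsplit : binomialExpectation p (m + 2) (fun k => (m + 2) * (m + 1) * p * (1 - p) *
        g (k + 1) - ((m + 1) * (1 - 2 * p) * k + k * (k - 1)) * g k) =
      (m + 2) * (m + 1) * p * (1 - p) * binomialExpectation p (m + 2) (fun k => g (k + 1)) -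
        (m + 1) * (1 - 2 * p) * binomialExpectation p (m + 2) (fun k => k * g k) -
        binomialExpectation p (m + 2) (fun k => k * ((k - 1) * g k)) := by
    simp only [binomialExpectation, mul_sum, ← sum_sub_distrib]
    exact sum_congr rfl fun _ _ => by ring
  rw [hsplit, binomialExpectation_succ_natCast_mul, binomialExpectation_succ_natCast_mul]
  simp only [Nat.cast_add_one, add_sub_cancel_right]
  rw [binomialExpectation_succ_natCast_mul]
  simp only [binomialExpectation_succ]
  simp only [binomialExpectation, mul_sum, ← sum_sub_distrib]
  exact sum_congr rfl fun _ _ => by ring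

end Binomial

lemma abs_binomialExpectation_le {p : ℝ} (hp0 : 0 ≤ p) (hp1 : p ≤ 1) (n : ℕ) {f : ℕ → ℝ}
    {M : ℝ} (hf : ∀ k, |f k| ≤ M) : |binomialExpectation p n f| ≤ M := by
  have hw : ∀ ij : ℕ × ℕ, 0 ≤ (n.choose ij.1 : ℝ) * p ^ ij.1 * (1 - p) ^ ij.2 := fun ij => by
    have : 0 ≤ 1 - p := by linarith
    positivity
  calc |binomialExpectation p n f|
      ≤ ∑ ij ∈ antidiagonal n, |n.choose ij.1 * p ^ ij.1 * (1 - p) ^ ij.2 * f ij.1| :=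
        abs_sum_le_sum_abs _ _
    _ ≤ binomialExpectation p n (fun _ => M) := by
        refine sum_le_sum fun ij _ => ?_
        rw [abs_mul, abs_of_nonneg (hw ij)]
        exact mul_le_mul_of_nonneg_left (hf _) (hw ij)
    _ = M := binomialExpectation_const p n M

lemma tsum_mul_eq_binomialExpectation {p : ℝ} {n : ℕ} {w : ℕ → ℝ} (hw0 : ∀ j, 0 ≤ w j)
    (hw1 : HasSum w 1) (hw : ∀ j ≤ n, w j = n.choose j * p ^ j * (1 - p) ^ (n - j))
    (f : ℕ → ℝ) : ∑' j, f j * w j = binomialExpectation p n f := by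
  have hrange : ∀ g : ℕ → ℝ, binomialExpectation p n g = ∑ j ∈ range (n + 1), g j * w j := by
    intro g
    rw [binomialExpectation, Nat.sum_antidiagonal_eq_sum_range_succ_mk]
    refine sum_congr rfl fun j hj => ?_
    rw [hw j (Nat.lt_succ_iff.1 (mem_range.1 hj))]
    ring
  have hzero : ∀ j ∉ range (n + 1), w j = 0 := by
    intro j hj
    have hle := sum_le_hasSum (insert j (range (n + 1))) (fun i _ => hw0 i) hw1
    have hone : ∑ i ∈ range (n + 1), w i = 1 := by
      simpa using (hrange fun _ => 1).symm.trans (binomialExpectation_const p n 1)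
    rw [sum_insert hj, hone] at hle
    exact le_antisymm (by linarith) (hw0 j)
  rw [tsum_eq_sum fun j hj => by rw [hzero j hj, mul_zero], hrange]

section BirthDeath

variable {α : ℝ} {β q : ℕ → ℝ}

-- This is `F j / q j ≤ F (j + 1) / q (j + 1)` for the distribution function `F` of `q`;
-- `tsum_mul_sub_le` says dually that `(1 - F j) / q j` decreases.
lemma sum_range_mul_sub_le (hα : 0 < α) (hq : ∀ j, 0 < q j)
    (hbal : ∀ j, α * q j = β (j + 1) * q (j + 1)) (hβ : Monotone β) (j : ℕ) :
    (∑ i ∈ range (j + 1), q i) * (q (j + 1) - q j) ≤ q j * q (j + 1) := by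
  have hflow : α * ∑ i ∈ range (j + 1), q i ≤ β (j + 1) * ∑ i ∈ range (j + 2), q i :=
    calc α * ∑ i ∈ range (j + 1), q i = ∑ i ∈ range (j + 1), β (i + 1) * q (i + 1) := by
          rw [mul_sum]; exact sum_congr rfl fun i _ => hbal i
      _ ≤ ∑ i ∈ range (j + 1), β (j + 1) * q (i + 1) := by
          gcongr with i hi
          · exact (hq _).le
          · exact hβ (by simpa [Nat.lt_succ_iff] using hi)
      _ ≤ β (j + 1) * ∑ i ∈ range (j + 2), q i := by
          rw [← mul_sum, sum_range_succ' _ (j + 1)]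
          have hβpos : 0 < β (j + 1) :=
            pos_of_mul_pos_left ((hbal j).symm ▸ mul_pos hα (hq j)) (hq _).le
          exact mul_le_mul_of_nonneg_left (le_add_of_nonneg_right (hq 0).le) hβpos.le
  rw [sum_range_succ _ (j + 1)] at hflow
  refine le_of_mul_le_mul_left ?_ hα
  linear_combination mul_le_mul_of_nonneg_left hflow (hq (j + 1)).le -
    (∑ i ∈ range (j + 1), q i + q (j + 1)) * hbal j

lemma tsum_mul_sub_le (hα : 0 < α) (hq : ∀ j, 0 < q j) (hsum : Summable q)
    (hbal : ∀ j, α * q j = β (j + 1) * q (j + 1)) (hβ : Monotone β) (j : ℕ) :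
    (∑' i, q (i + j + 1)) * (q j - q (j + 1)) ≤ q j * q (j + 1) := by
  have htail : ∀ k, Summable fun i => q (i + k) := fun k => (summable_nat_add_iff k).2 hsum
  have hflow : β (j + 1) * ∑' i, q (i + j + 1) ≤ α * (q j + ∑' i, q (i + j + 1)) :=
    calc β (j + 1) * ∑' i, q (i + j + 1) = ∑' i, β (j + 1) * q (i + j + 1) := tsum_mul_left.symm
      _ ≤ ∑' i, α * q (i + j) := by
          refine (htail (j + 1)).mul_left _ |>.tsum_le_tsum (fun i => ?_) ((htail j).mul_left _)
          rw [hbal]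
          exact mul_le_mul_of_nonneg_right (hβ (by omega)) (hq _).le
      _ = α * (q j + ∑' i, q (i + j + 1)) := by
          rw [tsum_mul_left, (htail j).tsum_eq_zero_add]
          simp only [zero_add, add_right_comm]
  refine le_of_mul_le_mul_left ?_ hα
  linear_combination mul_le_mul_of_nonneg_left hflow (hq (j + 1)).le +
    (∑' i, q (i + j + 1)) * hbal j

noncomputable def steinSolution (α : ℝ) (q χ : ℕ → ℝ) : ℕ → ℝ
  | 0 => 0
  | j + 1 => (∑ i ∈ range (j + 1), (χ i - ∑' k, χ k * q k) * q i) / (α * q j)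

lemma steinSolution_spec {χ : ℕ → ℝ} (hα : α ≠ 0) (hq : ∀ j, q j ≠ 0)
    (hbal : ∀ j, α * q j = β (j + 1) * q (j + 1)) (j : ℕ) :
    α * steinSolution α q χ (j + 1) - β j * steinSolution α q χ j = χ j - ∑' k, χ k * q k := by
  cases j with
  | zero =>
    simp only [steinSolution, zero_add, sum_range_one, mul_zero, sub_zero]
    field_simp [hq 0]
  | succ j =>
    simp only [steinSolution]
    rw [sum_range_succ]
    field_simp [hq j, hq (j + 1)]
    linear_combination (∑ i ∈ range (j + 1), (χ i - ∑' k, χ k * q k) * q i) * hbal j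

lemma mul_steinSolution_succ {χ : ℕ → ℝ} (hα : α ≠ 0) {j : ℕ} (hq : q j ≠ 0) :
    α * q j * steinSolution α q χ (j + 1) =
      ∑ i ∈ range (j + 1), χ i * q i - (∑' k, χ k * q k) * ∑ i ∈ range (j + 1), q i := by
  rw [steinSolution, mul_div_cancel₀ _ (mul_ne_zero hα hq), mul_sum, ← sum_sub_distrib]
  exact sum_congr rfl fun i _ => by ring

lemma abs_mul_sub_sub_le {e A B F T u v : ℝ} (he0 : 0 ≤ e) (he1 : e ≤ 1) (hA0 : 0 ≤ A)
    (hAF : A ≤ F) (hB0 : 0 ≤ B) (hBT : B ≤ T) (hu : 0 ≤ u) (hv : 0 ≤ v) :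
    |e * (F * u + T * v) - A * u - B * v| ≤ F * u + T * v := by
  have hAu := mul_le_mul_of_nonneg_right hAF hu
  have hBv := mul_le_mul_of_nonneg_right hBT hv
  have hAu0 := mul_nonneg hA0 hu
  have hBv0 := mul_nonneg hB0 hv
  have hw : 0 ≤ F * u + T * v := by linarith
  have he := mul_le_of_le_one_left hw he1
  have he' := mul_nonneg he0 hw
  rw [abs_le]
  constructor <;> linarith

lemma abs_steinSolution_sub_le {χ : ℕ → ℝ} (hα : 0 < α) (hq : ∀ j, 0 < q j) (hq1 : HasSum q 1)
    (hbal : ∀ j, α * q j = β (j + 1) * q (j + 1)) (hβ : Monotone β)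
    (hχ0 : ∀ j, 0 ≤ χ j) (hχ1 : ∀ j, χ j ≤ 1) (j : ℕ) :
    |steinSolution α q χ (j + 2) - steinSolution α q χ (j + 1)| ≤ 1 / α := by
  have hχq : Summable fun k => χ k * q k :=
    hq1.summable.of_nonneg_of_le (fun k => mul_nonneg (hχ0 k) (hq k).le)
      (fun k => mul_le_of_le_one_left (hq k).le (hχ1 k))
  have hu := sub_nonneg.2 (tsum_mul_sub_le hα hq hq1.summable hbal hβ j)
  have hv := sub_nonneg.2 (sum_range_mul_sub_le hα hq hbal hβ j)
  have hg := mul_steinSolution_succ (χ := χ) hα.ne' (hq j).ne'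
  have hg' := mul_steinSolution_succ (χ := χ) hα.ne' (hq (j + 1)).ne'
  rw [sum_range_succ, sum_range_succ _ (j + 1)] at hg'
  set F := ∑ i ∈ range (j + 1), q i
  set T := ∑' i, q (i + j + 1)
  set A := ∑ i ∈ range (j + 1), χ i * q i
  set B := ∑' i, χ (i + j + 1) * q (i + j + 1)
  have hFT : F + T = 1 := hq1.summable.sum_add_tsum_nat_add (j + 1) |>.trans hq1.tsum_eq
  have hAB : A + B = ∑' k, χ k * q k := hχq.sum_add_tsum_nat_add (j + 1)
  have hAF : A ≤ F := sum_le_sum fun i _ => mul_le_of_le_one_left (hq i).le (hχ1 i)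
  have hBT : B ≤ T := ((summable_nat_add_iff (j + 1)).2 hχq).tsum_le_tsum
    (fun i => mul_le_of_le_one_left (hq _).le (hχ1 _))
    ((summable_nat_add_iff (j + 1)).2 hq1.summable)
  rw [← hAB] at hg hg'
  have hworst := abs_mul_sub_sub_le (hχ0 (j + 1)) (hχ1 (j + 1))
    (sum_nonneg fun i _ => mul_nonneg (hχ0 i) (hq i).le) hAF
    (tsum_nonneg fun i => mul_nonneg (hχ0 _) (hq _).le) hBT hu hv
  have hdiff : α * (q j * q (j + 1)) *
      (steinSolution α q χ (j + 2) - steinSolution α q χ (j + 1)) =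
      χ (j + 1) * (F * (q j * q (j + 1) - T * (q j - q (j + 1))) +
        T * (q j * q (j + 1) - F * (q (j + 1) - q j))) -
      A * (q j * q (j + 1) - T * (q j - q (j + 1))) -
      B * (q j * q (j + 1) - F * (q (j + 1) - q j)) := by
    linear_combination q j * hg' - q (j + 1) * hg +
      (A * (q (j + 1) - q j) - χ (j + 1) * q j * q (j + 1)) * hFT
  have hw : 0 < q j * q (j + 1) := mul_pos (hq j) (hq (j + 1))
  rw [← hdiff, abs_mul, abs_of_pos (mul_pos hα hw)] at hworst
  rw [le_div_iff₀ hα]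
  refine le_of_mul_le_mul_right ?_ hw
  linear_combination hworst + (q j * q (j + 1)) * hFT

end BirthDeath

noncomputable def pbdDeathRate (γ : ℝ) (j : ℕ) : ℝ := γ * j + j * (j - 1)

lemma pbdDeathRate_monotone {γ : ℝ} (hγ : 0 ≤ γ) : Monotone (pbdDeathRate γ) :=
  monotone_nat_of_le_succ fun j => by
    simp only [pbdDeathRate, Nat.cast_add_one]
    nlinarith [(Nat.cast_nonneg j : (0 : ℝ) ≤ j)]

noncomputable def pbdWeight (α γ : ℝ) (j : ℕ) : ℝ :=
  α ^ j / ((Nat.factorial j : ℝ) * ∏ k ∈ Finset.Icc 1 j, (γ + k - 1))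

lemma pbdWeight_pos {α γ : ℝ} (hα : 0 < α) (hγ : 0 < γ) (j : ℕ) : 0 < pbdWeight α γ j := by
  have hprod : 0 < ∏ k ∈ Icc 1 j, (γ + k - 1) := prod_pos fun k hk => by
    have : (1 : ℝ) ≤ k := by exact_mod_cast (mem_Icc.1 hk).1
    linarith
  unfold pbdWeight
  positivity

lemma mul_pbdWeight_eq_pbdDeathRate_mul {α γ : ℝ} (hγ : 0 < γ) (j : ℕ) :
    α * pbdWeight α γ j = pbdDeathRate γ (j + 1) * pbdWeight α γ (j + 1) := by
  have hprod : ∏ k ∈ Icc 1 (j + 1), (γ + k - 1) = (∏ k ∈ Icc 1 j, (γ + k - 1)) * (γ + j) := by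
    rw [prod_Icc_succ_top (by omega)]
    push_cast
    ring
  have hprod0 : ∏ k ∈ Icc 1 j, (γ + k - 1) ≠ 0 := prod_ne_zero_iff.2 fun k hk => by
    have : (1 : ℝ) ≤ k := by exact_mod_cast (mem_Icc.1 hk).1
    linarith
  have hγj : γ + j ≠ 0 := by positivity
  unfold pbdWeight pbdDeathRate
  rw [hprod, Nat.factorial_succ]
  push_cast
  field_simp
  ring

theorem abs_binomialExpectation_sub_tsum_le {m : ℕ} {p α γ : ℝ} {q χ : ℕ → ℝ} (hp0 : 0 < p)
    (hp : p ≤ 1 / 2) (hα : α = (m + 2) * (m + 1) * p * (1 - p)) (hγ : γ = (m + 1) * (1 - 2 * p))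
    (hq : ∀ j, 0 < q j) (hq1 : HasSum q 1)
    (hbal : ∀ j, α * q j = pbdDeathRate γ (j + 1) * q (j + 1))
    (hχ0 : ∀ j, 0 ≤ χ j) (hχ1 : ∀ j, χ j ≤ 1) :
    |binomialExpectation p (m + 2) χ - ∑' j, χ j * q j| ≤ 2 * p ^ 2 := by
  have hα0 : 0 < α := by
    have : 0 < 1 - p := by linarith
    rw [hα]
    positivity
  have hβ := pbdDeathRate_monotone (γ := γ) (by rw [hγ]; nlinarith)
  set g := steinSolution α q χ
  have hstein : ∀ k, χ k - ∑' j, χ j * q j = α * g (k + 1) - pbdDeathRate γ k * g k :=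
    fun k => (steinSolution_spec hα0.ne' (fun j => (hq j).ne') hbal k).symm
  have hΔ : ∀ k, |g (k + 1) - 2 * g (k + 2) + g (k + 3)| ≤ 2 / α := fun k =>
    calc |g (k + 1) - 2 * g (k + 2) + g (k + 3)|
        = |(g (k + 1 + 2) - g (k + 1 + 1)) - (g (k + 2) - g (k + 1))| := by ring_nf
      _ ≤ 1 / α + 1 / α := (abs_sub _ _).trans (add_le_add
          (abs_steinSolution_sub_le hα0 hq hq1 hbal hβ hχ0 hχ1 _)
          (abs_steinSolution_sub_le hα0 hq hq1 hbal hβ hχ0 hχ1 _))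
      _ = 2 / α := by ring
  calc |binomialExpectation p (m + 2) χ - ∑' j, χ j * q j|
      = |binomialExpectation p (m + 2) fun k => χ k - ∑' j, χ j * q j| := by
        rw [binomialExpectation_sub, binomialExpectation_const]
    _ = α * p ^ 2 * |binomialExpectation p m fun k => g (k + 1) - 2 * g (k + 2) + g (k + 3)| := by
        simp_rw [hstein, pbdDeathRate, hγ, hα]
        rw [binomialExpectation_pbd_stein, ← hα, abs_mul, abs_of_pos (by positivity)]
    _ ≤ α * p ^ 2 * (2 / α) := by
        gcongr
        exact abs_binomialExpectation_le hp0.le (by linarith) m hΔ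
    _ = 2 * p ^ 2 := by field_simp

section Law

variable {Ω : Type*} [MeasurableSpace Ω] (P : Measure Ω) {X : Ω → ℕ}

lemma toReal_measure_preimage_eq_tsum [IsFiniteMeasure P] (hX : Measurable X) (S : Set ℕ) :
    (P (X ⁻¹' S)).toReal = ∑' j, S.indicator 1 j * (P {ω | X ω = j}).toReal := by
  classical
  rw [← Measure.map_apply hX (.of_discrete),
    ← (P.map X).tsum_indicator_apply_singleton S (.of_discrete),
    ENNReal.tsum_toReal_eq fun j => by
      rw [Set.indicator_apply]; split_ifs <;> simp [measure_ne_top]]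
  refine tsum_congr fun j => ?_
  by_cases hj : j ∈ S
  · simp [hj, Measure.map_apply hX (measurableSet_singleton j), Set.preimage, Set.mem_singleton_iff]
  · simp [hj]

lemma hasSum_toReal_measure_setOf_eq [IsProbabilityMeasure P] (hX : Measurable X) :
    HasSum (fun j => (P {ω | X ω = j}).toReal) 1 := by
  have h := toReal_measure_preimage_eq_tsum P hX Set.univ
  simp only [Set.preimage_univ, measure_univ, ENNReal.toReal_one, Set.indicator_univ,
    Pi.one_apply, one_mul] at h
  have hs : Summable fun j => (P {ω | X ω = j}).toReal := by
    by_contra hs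
    rw [tsum_eq_zero_of_not_summable hs] at h
    exact one_ne_zero h
  exact h ▸ hs.hasSum

end Law

/-- Corollary 5 of Daly, Lefèvre, Utev: polynomial birth–death approximation of
the binomial distribution `Bin(n, p)` by `π ∼ PBD(α, γj + j(j-1))` with
`α = n(n-1)p(1-p)` and `γ = (n-1)(1-2p)`. -/
theorem stmt7
    {Ω Ω' : Type*} [MeasurableSpace Ω] [MeasurableSpace Ω']
    (P : Measure Ω) [IsProbabilityMeasure P]
    (P' : Measure Ω') [IsProbabilityMeasure P']
    (n : ℕ) (hn : 2 ≤ n) (p : ℝ) (hp0 : 0 < p) (hp1 : p < 1 / 2)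
    (W : Ω → ℕ) (hW : Measurable W)
    (hWpmf : ∀ j : ℕ, j ≤ n → (P {ω | W ω = j}).toReal =
      (Nat.choose n j : ℝ) * p ^ j * (1 - p) ^ (n - j))
    (αr γ : ℝ) (hαr : αr = n * (n - 1) * p * (1 - p)) (hγ : γ = (n - 1) * (1 - 2 * p))
    (π : Ω' → ℕ) (hπ : Measurable π) (c : ℝ) (hc : 0 < c)
    (hπpmf : ∀ j : ℕ, (P' {ω | π ω = j}).toReal =
      c * αr ^ j / ((Nat.factorial j : ℝ) * ∏ k ∈ Finset.Icc 1 j, (γ + k - 1))) :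
    dTV (Measure.map (fun ω => (W ω : ℤ)) P) (Measure.map (fun ω => (π ω : ℤ)) P') ≤
      2 * p ^ 2 := by
  obtain ⟨m, rfl⟩ : ∃ m, n = m + 2 := ⟨n - 2, by omega⟩
  have hα : αr = (m + 2) * (m + 1) * p * (1 - p) := by rw [hαr]; push_cast; ring
  have hγ' : γ = (m + 1) * (1 - 2 * p) := by rw [hγ]; push_cast; ring
  have hα0 : 0 < αr := by
    have : 0 < 1 - p := by linarith
    rw [hα]
    positivity
  have hγ0 : 0 < γ := by rw [hγ']; nlinarith
  have hq : ∀ j, (P' {ω | π ω = j}).toReal = c * pbdWeight αr γ j := fun j =>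
    (hπpmf j).trans (mul_div_assoc _ _ _)
  refine Real.iSup_le (fun B => ?_) (by positivity)
  rw [Measure.map_apply (f := fun ω => (W ω : ℤ)) (measurable_from_nat.comp hW) (.of_discrete),
    Measure.map_apply (f := fun ω => (π ω : ℤ)) (measurable_from_nat.comp hπ) (.of_discrete)]
  change |(P (W ⁻¹' ((↑) ⁻¹' B))).toReal - (P' (π ⁻¹' ((↑) ⁻¹' B))).toReal| ≤ _
  rw [toReal_measure_preimage_eq_tsum P hW, toReal_measure_preimage_eq_tsum P' hπ,
    tsum_mul_eq_binomialExpectation (fun _ => ENNReal.toReal_nonneg)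
      (hasSum_toReal_measure_setOf_eq P hW) hWpmf]
  simp only [hq]
  exact abs_binomialExpectation_sub_tsum_le hp0 hp1.le hα hγ'
    (fun j => mul_pos hc (pbdWeight_pos hα0 hγ0 j))
    (by simpa only [hq] using hasSum_toReal_measure_setOf_eq P' hπ)
    (fun j => by rw [mul_left_comm, mul_pbdWeight_eq_pbdDeathRate_mul hγ0, mul_left_comm])
    (fun j => Set.indicator_nonneg (fun _ _ => zero_le_one) j)
    (fun j => Set.indicator_le_self' (fun _ _ => zero_le_one) j)
end

section
/- Let X_1, …, X_n be {0,1}-valued random variables on a common probability space with p_i = P(X_i = 1), W = X_1 + ⋯ + X_n, and λ = E[W] > 0. Suppose the X_i are totally positively dependent (TPD). Then for every a ∈ [0,∞): E[W·1_{(W > a)}] ≥ Σ_{i=1}^n p_i · P(W + 1 − X_i > a). Equivalently, the W-size-biased variable W_β stochastically dominates W + 1 − X_V, where V is a random index independent of (X_1,…,X_n) with P(V = i) = p_i/λ, and W + 1 − X_V ≥ 0 almost surely. -/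
/-!
Apply total positive dependence to `g₁ = id` and `g₂ = 1{a < · + 1}`: this gives
`p_i · P(W - X_i + 1 > a) ≤ E[X_i · 1{W - X_i + 1 > a}] = E[X_i · 1{W > a}]`, the last equality
because the product vanishes unless `X_i = 1`. Summing over `i` and using `Σ_i X_i = W` yields
`E[W · 1{W > a}]`.
-/

open MeasureTheory

lemma monotone_ite_lt {α : Type*} [Preorder α] [DecidableLT α] (c : α) :
    Monotone fun t : α => if c < t then (1 : ℝ) else 0 := by
  intro x y hxy
  by_cases hx : c < x
  · simp [hx, hx.trans_le hxy]
  · simp only [hx, if_false]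
    split_ifs <;> norm_num

lemma natCast_mul_ite_lt_sub_add_one {x w : ℕ} (hx : x ≤ 1) (hxw : x ≤ w) (a : ℝ) :
    (x : ℝ) * (if a < ((w - x : ℕ) : ℝ) + 1 then 1 else 0) =
      x * (if a < (w : ℝ) then 1 else 0) := by
  interval_cases x
  · simp
  · rw [Nat.cast_sub hxw]
    simp

lemma natCast_sub_add_one_eq {x w : ℕ} (hxw : x ≤ w) :
    ((w + 1 - x : ℕ) : ℝ) = ((w - x : ℕ) : ℝ) + 1 := by
  rw [Nat.sub_add_comm hxw]
  push_cast
  rfl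

section Integrals

variable {Ω : Type*} [MeasurableSpace Ω] {P : Measure Ω}

lemma integral_natCast_eq_measureReal_of_le_one {Y : Ω → ℕ} (hY : Measurable Y)
    (hY1 : ∀ ω, Y ω ≤ 1) : ∫ ω, (Y ω : ℝ) ∂P = P.real {ω | Y ω = 1} := by
  rw [← integral_indicator_one (s := {ω | Y ω = 1}) (hY (measurableSet_singleton 1))]
  congr with ω
  rcases Nat.le_one_iff_eq_zero_or_eq_one.mp (hY1 ω) with h | h <;> simp [h]

lemma integral_ite_lt_eq_measureReal {f : Ω → ℝ} (hf : Measurable f) (a : ℝ) :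
    ∫ ω, (if a < f ω then (1 : ℝ) else 0) ∂P = P.real {ω | a < f ω} := by
  rw [← integral_indicator_one (measurableSet_lt measurable_const hf)]
  rfl

lemma integrable_natCast_mul_ite_lt [IsFiniteMeasure P] {Y W : Ω → ℕ} (hY : Measurable Y)
    (hW : Measurable W) (hY1 : ∀ ω, Y ω ≤ 1) (a : ℝ) :
    Integrable (fun ω => (Y ω : ℝ) * if a < (W ω : ℝ) then 1 else 0) P := by
  have hm : Measurable fun ω => (Y ω : ℝ) * if a < (W ω : ℝ) then 1 else 0 :=
    (by fun_prop : Measurable fun ω => (Y ω : ℝ)).mul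
      (Measurable.ite (measurableSet_lt measurable_const (by fun_prop)) measurable_const
        measurable_const)
  refine Integrable.of_bound hm.aestronglyMeasurable 1 (Filter.Eventually.of_forall fun ω => ?_)
  have := hY1 ω
  split_ifs <;> simp [Nat.cast_le_one.mpr this]

end Integrals

theorem stmt9_general
    {Ω : Type*} [MeasurableSpace Ω] (P : Measure Ω) [IsProbabilityMeasure P]
    (n : ℕ) (X : Fin n → Ω → ℕ) (hXm : ∀ i, Measurable (X i))
    (hX01 : ∀ i ω, X i ω ≤ 1)
    (p : Fin n → ℝ) (hp : ∀ i, p i = (P {ω | X i ω = 1}).toReal)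
    (W : Ω → ℕ) (hWdef : ∀ ω, W ω = ∑ i, X i ω)
    (hTPD : ∀ (i : Fin n) (g₁ g₂ : ℝ → ℝ), Monotone g₁ → Monotone g₂ →
      (∫ ω, g₁ (X i ω : ℝ) ∂P) * (∫ ω, g₂ ((W ω - X i ω : ℕ) : ℝ) ∂P) ≤
        ∫ ω, g₁ (X i ω : ℝ) * g₂ ((W ω - X i ω : ℕ) : ℝ) ∂P) :
    ∀ a : ℝ, 0 ≤ a →
      (∑ i, p i * (P {ω | a < ((W ω + 1 - X i ω : ℕ) : ℝ)}).toReal) ≤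
        ∫ ω, (W ω : ℝ) * (if a < (W ω : ℝ) then (1 : ℝ) else 0) ∂P := by
  intro a _
  have hWm : Measurable W := by
    rw [funext hWdef]
    exact Finset.measurable_sum _ fun i _ => hXm i
  have hXW (i : Fin n) (ω : Ω) : X i ω ≤ W ω :=
    hWdef ω ▸ Finset.single_le_sum (fun j _ => Nat.zero_le (X j ω)) (Finset.mem_univ i)
  have hstep (i : Fin n) : p i * (P {ω | a < ((W ω + 1 - X i ω : ℕ) : ℝ)}).toReal ≤
      ∫ ω, (X i ω : ℝ) * (if a < (W ω : ℝ) then 1 else 0) ∂P := by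
    have h := hTPD i id (fun t => if a < t + 1 then 1 else 0) monotone_id
      ((monotone_ite_lt a).comp (monotone_id.add_const 1))
    simp only [id, natCast_mul_ite_lt_sub_add_one (hX01 i _) (hXW i _)] at h
    rw [integral_natCast_eq_measureReal_of_le_one (hXm i) (hX01 i),
      integral_ite_lt_eq_measureReal (by fun_prop)] at h
    rw [hp i, ← measureReal_def, ← measureReal_def]
    simpa only [natCast_sub_add_one_eq (hXW i _)] using h
  calc _ ≤ ∑ i, ∫ ω, (X i ω : ℝ) * (if a < (W ω : ℝ) then 1 else 0) ∂P :=
        Finset.sum_le_sum fun i _ => hstep i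
    _ = ∫ ω, (W ω : ℝ) * (if a < (W ω : ℝ) then 1 else 0) ∂P := by
        rw [← integral_finsetSum _ fun i _ =>
          integrable_natCast_mul_ite_lt (hXm i) hWm (hX01 i) a]
        simp only [← Finset.sum_mul, ← Nat.cast_sum, hWdef]

/-- Lemma 2 of Daly, Lefèvre, Utev: for totally positively dependent (TPD)
indicators with `E[W] = λ > 0`, one has
`E[W·1_{(W > a)}] ≥ Σ_i p_i · P(W + 1 - X_i > a)` for all `a ≥ 0`,
i.e. the size-biased variable `W_β` stochastically dominates `W + 1 - X_V`. -/
theorem stmt9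
    {Ω : Type*} [MeasurableSpace Ω] (P : Measure Ω) [IsProbabilityMeasure P]
    (n : ℕ) (X : Fin n → Ω → ℕ) (hXm : ∀ i, Measurable (X i))
    (hX01 : ∀ i ω, X i ω ≤ 1)
    (p : Fin n → ℝ) (hp : ∀ i, p i = (P {ω | X i ω = 1}).toReal)
    (W : Ω → ℕ) (hWdef : ∀ ω, W ω = ∑ i, X i ω)
    (lam : ℝ) (hlam : lam = ∫ ω, (W ω : ℝ) ∂P) (hlam0 : 0 < lam)
    (hTPD : ∀ (i : Fin n) (g₁ g₂ : ℝ → ℝ), Monotone g₁ → Monotone g₂ →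
      (∫ ω, g₁ (X i ω : ℝ) ∂P) * (∫ ω, g₂ ((W ω - X i ω : ℕ) : ℝ) ∂P) ≤
        ∫ ω, g₁ (X i ω : ℝ) * g₂ ((W ω - X i ω : ℕ) : ℝ) ∂P) :
    ∀ a : ℝ, 0 ≤ a →
      (∑ i, p i * (P {ω | a < ((W ω + 1 - X i ω : ℕ) : ℝ)}).toReal) ≤
        ∫ ω, (W ω : ℝ) * (if a < (W ω : ℝ) then (1 : ℝ) else 0) ∂P :=
  stmt9_general P n X hXm hX01 p hp W hWdef hTPD
end

section
/- Fix an integer s ≥ 1. Let X_1, …, X_n be {0,1}-valued random variables on a common probability space, W = X_1 + ⋯ + X_n, W_i = W − X_i, and λ = E[W] > 0. Let δ_1, …, δ_n ≥ 0 with δ := Σ_{i=1}^n δ_i > 0, and set p = min(λ/δ, δ/λ). Let F_s denote the class of non-decreasing functions g : ℕ → [0,∞) with g(0) = 0 and Δ^s g(j) ≥ 0 for all j ∈ ℕ. (a) If E[X_i g(W_i)] ≤ δ_i·E[g(W_i)] for all g ∈ F_s and every i ((s,δ)-local negative dependence), then for every g ∈ F_s: E[g(W+1)] ≥ (p/λ)·E[W·g(W)].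 (b) If E[X_i g(W_i)] ≥ δ_i·E[g(W_i)] for all g ∈ F_s and every i ((s,δ)-local positive dependence), then for every g ∈ F_s: (1/λ)·E[W·g(W)] ≥ p·Σ_{i=1}^n (δ_i/δ)·E[g(W + 1 − X_i)]. -/
open MeasureTheory ProbabilityTheory

/-- Membership in the class `F_s`: non-negative, non-decreasing, `s`-convex
functions `g : ℕ → ℝ` with `g 0 = 0`. -/
def memFs (s : ℕ) (g : ℕ → ℝ) : Prop :=
  (∀ j, 0 ≤ g j) ∧ Monotone g ∧ g 0 = 0 ∧ ∀ j, 0 ≤ ndiff^[s] g j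

lemma ndiff_iter_shift (t : ℕ) (u : ℕ → ℝ) :
    ndiff^[t] (fun j => u (j + 1)) = fun j => ndiff^[t] u (j + 1) := by
  induction t generalizing u with
  | zero => rfl
  | succ t ih =>
    rw [Function.iterate_succ_apply, Function.iterate_succ_apply,
      show ndiff (fun j => u (j + 1)) = fun j => ndiff u (j + 1) from rfl, ih]

/-- The shifted function `h j = g (j+1) - g 1`. -/
noncomputable def shiftg (g : ℕ → ℝ) : ℕ → ℝ := fun j => g (j + 1) - g 1

lemma memFs_shift {s : ℕ} (hs : 1 ≤ s) {g : ℕ → ℝ} (hg : memFs s g) :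
    memFs s (shiftg g) := by
  obtain ⟨hnn, hmono, hg0, hd⟩ := hg
  refine ⟨fun j => sub_nonneg.2 (hmono (by omega)), fun a b hab =>
    sub_le_sub_right (hmono (by omega)) _, sub_self _, ?_⟩
  obtain ⟨t, rfl⟩ : ∃ t, s = t + 1 := ⟨s - 1, by omega⟩
  intro j
  have h1 : ndiff (shiftg g) = fun j => ndiff g (j + 1) := by
    funext k; simp [ndiff, shiftg]
  rw [Function.iterate_succ_apply, h1, ndiff_iter_shift]
  have := hd (j + 1)
  rwa [Function.iterate_succ_apply] at this

lemma integrable_aux {Ω : Type*} [MeasurableSpace Ω] (P : Measure Ω) [IsProbabilityMeasure P]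
    (f₁ f₂ : Ω → ℕ) (h₁ : Measurable f₁) (h₂ : Measurable f₂)
    (N : ℕ) (hb₁ : ∀ ω, f₁ ω ≤ N) (hb₂ : ∀ ω, f₂ ω ≤ N)
    (u : ℕ → ℕ → ℝ) : Integrable (fun ω => u (f₁ ω) (f₂ ω)) P := by
  have hm : Measurable fun ω => u (f₁ ω) (f₂ ω) :=
    (measurable_of_countable (fun p : ℕ × ℕ => u p.1 p.2)).comp (h₁.prodMk h₂)
  refine ⟨hm.aestronglyMeasurable, HasFiniteIntegral.of_bounded
    (C := ∑ k ∈ Finset.range (N + 1), ∑ l ∈ Finset.range (N + 1), |u k l|) ?_⟩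
  filter_upwards with ω
  calc ‖u (f₁ ω) (f₂ ω)‖ = |u (f₁ ω) (f₂ ω)| := rfl
    _ ≤ ∑ l ∈ Finset.range (N + 1), |u (f₁ ω) l| :=
        Finset.single_le_sum (f := fun l => |u (f₁ ω) l|) (fun l _ => abs_nonneg _)
          (Finset.mem_range.2 (by have := hb₂ ω; omega))
    _ ≤ ∑ k ∈ Finset.range (N + 1), ∑ l ∈ Finset.range (N + 1), |u k l| :=
        Finset.single_le_sum (f := fun k => ∑ l ∈ Finset.range (N + 1), |u k l|)
          (fun k _ => Finset.sum_nonneg fun l _ => abs_nonneg _)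
          (Finset.mem_range.2 (by have := hb₁ ω; omega))

/-- Lemma 3 of Daly, Lefèvre, Utev: (a) under `(s,δ)`-local negative dependence,
`W_α = W + 1` dominates `v_p W_β` in the `s`-convex order on `F_s`; (b) under
`(s,δ)`-local positive dependence, `W_β` dominates `v_p (W_α - X_V)` on `F_s`. -/
theorem stmt11
    {Ω : Type*} [MeasurableSpace Ω] (P : Measure Ω) [IsProbabilityMeasure P]
    (s : ℕ) (hs : 1 ≤ s)
    (n : ℕ) (X : Fin n → Ω → ℕ) (hXm : ∀ i, Measurable (X i))
    (hX01 : ∀ i ω, X i ω ≤ 1)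
    (W : Ω → ℕ) (hWdef : ∀ ω, W ω = ∑ i, X i ω)
    (lam : ℝ) (hlam : lam = ∫ ω, (W ω : ℝ) ∂P) (hlam0 : 0 < lam)
    (δ : Fin n → ℝ) (hδ0 : ∀ i, 0 ≤ δ i)
    (δt : ℝ) (hδt : δt = ∑ i, δ i) (hδtpos : 0 < δt)
    (p : ℝ) (hpdef : p = min (lam / δt) (δt / lam)) :
    ((∀ (i : Fin n) (g : ℕ → ℝ), memFs s g →
        (∫ ω, (X i ω : ℝ) * g (W ω - X i ω) ∂P) ≤ δ i * ∫ ω, g (W ω - X i ω) ∂P) →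
      ∀ g : ℕ → ℝ, memFs s g →
        (p / lam) * (∫ ω, (W ω : ℝ) * g (W ω) ∂P) ≤ ∫ ω, g (W ω + 1) ∂P) ∧
    ((∀ (i : Fin n) (g : ℕ → ℝ), memFs s g →
        δ i * (∫ ω, g (W ω - X i ω) ∂P) ≤ ∫ ω, (X i ω : ℝ) * g (W ω - X i ω) ∂P) →
      ∀ g : ℕ → ℝ, memFs s g →
        p * (∑ i, (δ i / δt) * ∫ ω, g (W ω + 1 - X i ω) ∂P) ≤
          (1 / lam) * ∫ ω, (W ω : ℝ) * g (W ω) ∂P) := by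
  have hWm : Measurable W := by
    have : W = fun ω => ∑ i, X i ω := funext hWdef
    rw [this]; exact Finset.measurable_sum _ fun i _ => hXm i
  have hWb : ∀ ω, W ω ≤ n := by
    intro ω; rw [hWdef]
    calc ∑ i, X i ω ≤ ∑ _i : Fin n, 1 := Finset.sum_le_sum fun i _ => hX01 i ω
      _ = n := by simp
  have hXleW : ∀ (i : Fin n) ω, X i ω ≤ W ω := fun i ω => by
    rw [hWdef]
    exact Finset.single_le_sum (f := fun i => X i ω) (fun _ _ => Nat.zero_le _)
      (Finset.mem_univ i)
  have key : ∀ (u : ℕ → ℕ → ℝ) (i : Fin n), Integrable (fun ω => u (X i ω) (W ω)) P :=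
    fun u i => integrable_aux P (X i) W (hXm i) hWm (n + 1)
      (fun ω => by have := hX01 i ω; omega) (fun ω => by have := hWb ω; omega) u
  have key2 : ∀ u : ℕ → ℝ, Integrable (fun ω => u (W ω)) P :=
    fun u => integrable_aux P W W hWm hWm (n + 1)
      (fun ω => by have := hWb ω; omega) (fun ω => by have := hWb ω; omega) (fun a _ => u a)
  have hlamsum : lam = ∑ i, ∫ ω, (X i ω : ℝ) ∂P := by
    rw [hlam, ← integral_finset_sum _ (fun i _ => key (fun a _ => (a : ℝ)) i)]
    refine integral_congr_ae (ae_of_all _ fun ω => ?_)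
    show (W ω : ℝ) = ∑ i, (X i ω : ℝ)
    rw [hWdef ω]; exact Nat.cast_sum _ _
  have hlne : lam ≠ 0 := hlam0.ne'
  have hdne : δt ≠ 0 := hδtpos.ne'
  constructor
  · -- part (a)
    intro hyp g hg
    have hh := memFs_shift hs hg
    obtain ⟨hgnn, hgmono, hg0, -⟩ := hg
    -- pointwise identity and per-i estimate
    have Ha : ∀ i : Fin n, ∫ ω, (X i ω : ℝ) * g (W ω) ∂P ≤
        δ i * ((∫ ω, g (W ω + 1) ∂P) - g 1) + g 1 * ∫ ω, (X i ω : ℝ) ∂P := by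
      intro i
      have ptA : ∀ ω, (X i ω : ℝ) * g (W ω)
          = (X i ω : ℝ) * shiftg g (W ω - X i ω) + (X i ω : ℝ) * g 1 := by
        intro ω
        rcases Nat.le_one_iff_eq_zero_or_eq_one.mp (hX01 i ω) with h0 | h1
        · simp [h0]
        · have hw := hXleW i ω
          rw [h1] at hw ⊢
          have he : W ω - 1 + 1 = W ω := by omega
          simp only [shiftg, he]
          push_cast; ring
      have step1 : ∫ ω, (X i ω : ℝ) * g (W ω) ∂P
          = (∫ ω, (X i ω : ℝ) * shiftg g (W ω - X i ω) ∂P) + g 1 * ∫ ω, (X i ω : ℝ) ∂P := by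
        rw [integral_congr_ae (ae_of_all _ ptA),
          integral_add (key (fun a b => (a : ℝ) * shiftg g (b - a)) i)
            ((key (fun a _ => (a : ℝ)) i).mul_const (g 1)),
          integral_mul_const]
        ring
      have step2 := hyp i (shiftg g) hh
      have step3 : ∫ ω, shiftg g (W ω - X i ω) ∂P
          = (∫ ω, g ((W ω - X i ω) + 1) ∂P) - g 1 := by
        simp only [shiftg]
        rw [integral_sub (key (fun a b => g (b - a + 1)) i) (integrable_const _),
          integral_const]
        simp
      have step4 : ∫ ω, g ((W ω - X i ω) + 1) ∂P ≤ ∫ ω, g (W ω + 1) ∂P :=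
        integral_mono (key (fun a b => g (b - a + 1)) i) (key2 fun b => g (b + 1))
          (fun ω => hgmono (by have := hXleW i ω; omega))
      have step5 : δ i * (∫ ω, shiftg g (W ω - X i ω) ∂P)
          ≤ δ i * ((∫ ω, g (W ω + 1) ∂P) - g 1) := by
        rw [step3]
        exact mul_le_mul_of_nonneg_left (by linarith) (hδ0 i)
      linarith
    have hTsum : ∫ ω, (W ω : ℝ) * g (W ω) ∂P = ∑ i, ∫ ω, (X i ω : ℝ) * g (W ω) ∂P := by
      rw [← integral_finset_sum _ (fun i _ => key (fun a b => (a : ℝ) * g b) i)]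
      refine integral_congr_ae (ae_of_all _ fun ω => ?_)
      show (W ω : ℝ) * g (W ω) = ∑ i, (X i ω : ℝ) * g (W ω)
      rw [hWdef ω, Nat.cast_sum, Finset.sum_mul]
    have Ia : ∫ ω, (W ω : ℝ) * g (W ω) ∂P
        ≤ δt * ((∫ ω, g (W ω + 1) ∂P) - g 1) + g 1 * lam := by
      rw [hTsum, hδt, hlamsum, Finset.sum_mul, Finset.mul_sum, ← Finset.sum_add_distrib]
      exact Finset.sum_le_sum fun i _ => Ha i
    have hGnn : 0 ≤ ∫ ω, g (W ω + 1) ∂P := integral_nonneg fun ω => hgnn _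
    have hg1nn : 0 ≤ g 1 := hgnn 1
    have hg1G : g 1 ≤ ∫ ω, g (W ω + 1) ∂P := by
      have h1 : ∫ (_ : Ω), g 1 ∂P ≤ ∫ ω, g (W ω + 1) ∂P :=
        integral_mono (integrable_const _) (key2 fun b => g (b + 1))
          (fun ω => hgmono (by omega))
      simpa using h1
    rcases le_total lam δt with hc | hc
    · have hp : p = lam / δt := by
        rw [hpdef, min_eq_left]
        rw [div_le_div_iff₀ hδtpos hlam0]; nlinarith
      have h1 : ∫ ω, (W ω : ℝ) * g (W ω) ∂P ≤ δt * ∫ ω, g (W ω + 1) ∂P := by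
        nlinarith [mul_le_mul_of_nonneg_left hc hg1nn]
      have hple : p / lam = 1 / δt := by rw [hp]; field_simp
      rw [hple, div_mul_eq_mul_div, div_le_iff₀ hδtpos]
      linarith
    · have hp : p = δt / lam := by
        rw [hpdef, min_eq_right]
        rw [div_le_div_iff₀ hlam0 hδtpos]; nlinarith
      have h1 : ∫ ω, (W ω : ℝ) * g (W ω) ∂P ≤ lam * ∫ ω, g (W ω + 1) ∂P := by
        nlinarith [mul_nonneg (sub_nonneg.2 hc) (sub_nonneg.2 hg1G)]
      have hple : p / lam = δt / (lam * lam) := by rw [hp, div_div]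
      rw [hple, div_mul_eq_mul_div, div_le_iff₀ (mul_pos hlam0 hlam0)]
      nlinarith [mul_le_mul_of_nonneg_left h1 hδtpos.le,
        mul_le_mul_of_nonneg_right hc (mul_nonneg hlam0.le hGnn)]
  · -- part (b)
    intro hyp g hg
    have hh := memFs_shift hs hg
    obtain ⟨hgnn, hgmono, hg0, -⟩ := hg
    have hGi : ∀ i : Fin n, ∫ ω, g (W ω + 1 - X i ω) ∂P
        = ∫ ω, g ((W ω - X i ω) + 1) ∂P := by
      intro i
      refine integral_congr_ae (ae_of_all _ fun ω => ?_)
      show g (W ω + 1 - X i ω) = g ((W ω - X i ω) + 1)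
      congr 1
      have := hXleW i ω; omega
    have Hb : ∀ i : Fin n, δ i * ∫ ω, g ((W ω - X i ω) + 1) ∂P
        ≤ (∫ ω, (X i ω : ℝ) * g (W ω) ∂P) - g 1 * (∫ ω, (X i ω : ℝ) ∂P) + δ i * g 1 := by
      intro i
      have ptA : ∀ ω, (X i ω : ℝ) * g (W ω)
          = (X i ω : ℝ) * shiftg g (W ω - X i ω) + (X i ω : ℝ) * g 1 := by
        intro ω
        rcases Nat.le_one_iff_eq_zero_or_eq_one.mp (hX01 i ω) with h0 | h1
        · simp [h0]
        · have hw := hXleW i ω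
          rw [h1] at hw ⊢
          have he : W ω - 1 + 1 = W ω := by omega
          simp only [shiftg, he]
          push_cast; ring
      have step1 : ∫ ω, (X i ω : ℝ) * g (W ω) ∂P
          = (∫ ω, (X i ω : ℝ) * shiftg g (W ω - X i ω) ∂P) + g 1 * ∫ ω, (X i ω : ℝ) ∂P := by
        rw [integral_congr_ae (ae_of_all _ ptA),
          integral_add (key (fun a b => (a : ℝ) * shiftg g (b - a)) i)
            ((key (fun a _ => (a : ℝ)) i).mul_const (g 1)),
          integral_mul_const]
        ring
      have step2 := hyp i (shiftg g) hh
      have step3 : δ i * (∫ ω, shiftg g (W ω - X i ω) ∂P)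
          = δ i * (∫ ω, g ((W ω - X i ω) + 1) ∂P) - δ i * g 1 := by
        have e : ∫ ω, shiftg g (W ω - X i ω) ∂P
            = (∫ ω, g ((W ω - X i ω) + 1) ∂P) - g 1 := by
          simp only [shiftg]
          rw [integral_sub (key (fun a b => g (b - a + 1)) i) (integrable_const _),
            integral_const]
          simp
        rw [e]; ring
      linarith
    have hTsum : ∫ ω, (W ω : ℝ) * g (W ω) ∂P = ∑ i, ∫ ω, (X i ω : ℝ) * g (W ω) ∂P := by
      rw [← integral_finset_sum _ (fun i _ => key (fun a b => (a : ℝ) * g b) i)]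
      refine integral_congr_ae (ae_of_all _ fun ω => ?_)
      show (W ω : ℝ) * g (W ω) = ∑ i, (X i ω : ℝ) * g (W ω)
      rw [hWdef ω, Nat.cast_sum, Finset.sum_mul]
    have hS : ∑ i, δ i * ∫ ω, g ((W ω - X i ω) + 1) ∂P
        ≤ (∫ ω, (W ω : ℝ) * g (W ω) ∂P) - g 1 * lam + g 1 * δt := by
      calc ∑ i, δ i * ∫ ω, g ((W ω - X i ω) + 1) ∂P
          ≤ ∑ i, ((∫ ω, (X i ω : ℝ) * g (W ω) ∂P) - g 1 * (∫ ω, (X i ω : ℝ) ∂P)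
              + δ i * g 1) := Finset.sum_le_sum fun i _ => Hb i
        _ = (∫ ω, (W ω : ℝ) * g (W ω) ∂P) - g 1 * lam + g 1 * δt := by
            rw [hTsum, hlamsum, hδt, Finset.sum_add_distrib, Finset.sum_sub_distrib,
              ← Finset.mul_sum, ← Finset.sum_mul]
            ring
    have hg1nn : 0 ≤ g 1 := hgnn 1
    have hTg1 : g 1 * lam ≤ ∫ ω, (W ω : ℝ) * g (W ω) ∂P := by
      have hpt : ∀ ω, (W ω : ℝ) * g 1 ≤ (W ω : ℝ) * g (W ω) := fun ω => by
        rcases Nat.eq_zero_or_pos (W ω) with h0 | h1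
        · simp [h0]
        · exact mul_le_mul_of_nonneg_left (hgmono h1) (Nat.cast_nonneg _)
      have h2 := integral_mono (key2 fun b => (b : ℝ) * g 1) (key2 fun b => (b : ℝ) * g b) hpt
      rw [integral_mul_const, ← hlam] at h2
      linarith
    have hTnn : 0 ≤ ∫ ω, (W ω : ℝ) * g (W ω) ∂P :=
      integral_nonneg fun ω => mul_nonneg (Nat.cast_nonneg _) (hgnn _)
    have hSnn : 0 ≤ ∑ i, δ i * ∫ ω, g ((W ω - X i ω) + 1) ∂P :=
      Finset.sum_nonneg fun i _ => mul_nonneg (hδ0 i) (integral_nonneg fun ω => hgnn _)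
    simp only [hGi]
    have hsum : ∑ i, (δ i / δt) * ∫ ω, g ((W ω - X i ω) + 1) ∂P
        = (∑ i, δ i * ∫ ω, g ((W ω - X i ω) + 1) ∂P) / δt := by
      rw [Finset.sum_div]
      exact Finset.sum_congr rfl fun i _ => by ring
    rw [hsum, ← mul_div_assoc, one_div, inv_mul_eq_div, div_le_div_iff₀ hδtpos hlam0]
    rcases le_total δt lam with hc | hc
    · have hp : p = δt / lam := by
        rw [hpdef, min_eq_right]
        rw [div_le_div_iff₀ hlam0 hδtpos]; nlinarith
      have hST : ∑ i, δ i * ∫ ω, g ((W ω - X i ω) + 1) ∂P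
          ≤ ∫ ω, (W ω : ℝ) * g (W ω) ∂P := by
        nlinarith [mul_le_mul_of_nonneg_left hc hg1nn]
      have he : p * (∑ i, δ i * ∫ ω, g ((W ω - X i ω) + 1) ∂P) * lam
          = δt * ∑ i, δ i * ∫ ω, g ((W ω - X i ω) + 1) ∂P := by
        rw [hp]; field_simp
      rw [he]
      nlinarith [mul_le_mul_of_nonneg_left hST hδtpos.le]
    · have hp : p = lam / δt := by
        rw [hpdef, min_eq_left]
        rw [div_le_div_iff₀ hδtpos hlam0]; nlinarith
      have he : p * (∑ i, δ i * ∫ ω, g ((W ω - X i ω) + 1) ∂P) * lam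
          = lam * (∑ i, δ i * ∫ ω, g ((W ω - X i ω) + 1) ∂P) * lam / δt := by
        rw [hp]; ring
      rw [he, div_le_iff₀ hδtpos]
      nlinarith [mul_le_mul_of_nonneg_left hS (mul_nonneg hlam0.le hlam0.le),
        mul_le_mul_of_nonneg_right hTg1 (mul_nonneg hlam0.le (sub_nonneg.2 hc)),
        mul_le_mul_of_nonneg_right hc (mul_nonneg hTnn (sub_nonneg.2 hc)),
        mul_le_mul_of_nonneg_left hc (mul_nonneg hTnn hlam0.le)]
end
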